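/- arXiv:0912.0506 — 7 statements merged into one kernel-verified Lean document; each statement's English description precedes it below -/
import Mathlib

section
/- Let M be a non-zero bi-nilpotent Dieudonné module over k which is generated by an element z ∈ M, with d = dim_k(M/FM) and c = dim_k(M/VM). Then the family consisting of F^i z for 1 ≤ i ≤ c together with V^i z for 0 ≤ i ≤ d−1 is a W-basis of M; in particular M has rank h = c + d as a W-module. -/
/-!
Work modulo `p`: on `M/pM` the maps `F` and `V` are semilinear, nilpotent and `FV = VF = 0`.
Let `s` and `t` be least with `F^(s+1) z ≡ 0` and `V^(t+1) z ≡ 0 (mod p)`. Then `F z, …, F^s z` are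
independent mod `p` (inductively: `F^(s-1)` kills the span of `F² z, …, F^s z` but not `F z`),
and so are `V z, …, V^t z`; applying `V` to a relation among `F z, …, F^s z, z, …, V^(t-1) z`
kills its `F`-part, so this family `G` of `s + t` elements is independent mod `p`.
Since `z` generates, `FM = ⟨F z, …, F^s z⟩ + pM` and `VM = ⟨V z, …, V^t z⟩ + pM`; moreover
`V^t z ∈ FM` because `V^(t+1) z ∈ pM = VFM` and `V` is injective. Hence `G` spans `M` modulo `p`,
so spans `M` by Nakayama, and is a basis as it has at most `rank M` elements. Counting dimensions
in `M/pM` then gives `dim M/FM = t` and `dim M/VM = s`.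
-/

noncomputable section

open Set Submodule Module Function

namespace DieudonneStmt

section SemilinearIterate

variable {R : Type*} [Semiring R] {M : Type*} [AddCommMonoid M] [Module R M] {τ : R →+* R}

theorem iterate_map_smulₛₗ (f : M →ₛₗ[τ] M) (n : ℕ) (a : R) (x : M) :
    f^[n] (a • x) = τ^[n] a • f^[n] x := by
  induction n generalizing a x with
  | zero => rfl
  | succ n ih => simp only [iterate_succ_apply, map_smulₛₗ, ih]

theorem iterate_eq_zero_of_mem_span (f : M →ₛₗ[τ] M) {n : ℕ} {s : Set M}
    (hs : ∀ x ∈ s, f^[n] x = 0) {x : M} (hx : x ∈ span R s) : f^[n] x = 0 := by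
  induction hx using span_induction with
  | mem y hy => exact hs y hy
  | zero => exact iterate_map_zero f n
  | add y y' _ _ hy hy' => rw [iterate_map_add, hy, hy', add_zero]
  | smul a y _ hy => rw [iterate_map_smulₛₗ, hy, smul_zero]

theorem iterate_mem_of_le {f : M →ₛₗ[τ] M} {N : Submodule R M}
    (hN : N ≤ N.comap f) {z : M} {m n : ℕ} (hm : f^[m] z ∈ N) (hmn : m ≤ n) : f^[n] z ∈ N := by
  obtain ⟨k, rfl⟩ := Nat.exists_eq_add_of_le hmn
  rw [add_comm, iterate_add_apply]
  exact MapsTo.iterate (f := f) (s := (N : Set M)) (fun _ hx ↦ hN hx) k hm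

end SemilinearIterate

section VectorSpace

variable {K : Type*} [Field K] {V : Type*} [AddCommGroup V] [Module K V]

theorem linearIndependent_iterate {τ : K →+* K} (f : V →ₛₗ[τ] V) {s : ℕ} {u : V}
    (hs : f^[s] u = 0) (hlt : ∀ i < s, f^[i] u ≠ 0) :
    LinearIndependent K (fun i : Fin s ↦ f^[i] u) := by
  induction s generalizing u with
  | zero => exact linearIndependent_empty_type
  | succ s ih =>
    have hcons : (fun i : Fin (s + 1) ↦ f^[i] u) = Fin.cons u (fun i : Fin s ↦ f^[i] (f u)) := by
      ext i
      cases i using Fin.cases <;> simp [iterate_succ_apply]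
    rw [hcons, linearIndependent_finCons]
    refine ⟨ih hs fun i hi ↦ hlt (i + 1) (by omega), fun hu ↦ hlt s (by omega) ?_⟩
    -- `f^[s]` kills the span of `f u, …, f^[s] u` but not `u`
    refine iterate_eq_zero_of_mem_span f ?_ hu
    rintro _ ⟨i, rfl⟩
    change f^[s] (f^[i] (f u)) = 0
    rw [← iterate_succ_apply, ← iterate_add_apply, show s + (i + 1) = i + (s + 1) by omega,
      iterate_add_apply, hs, iterate_map_zero]

theorem linearIndependent_sumElim_iterate {τ₁ τ₂ : K →+* K} (f : V →ₛₗ[τ₁] V) (g : V →ₛₗ[τ₂] V)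
    (hgf : ∀ x, g (f x) = 0) {s t : ℕ} {u : V}
    (hf : LinearIndependent K (fun i : Fin s ↦ f^[i + 1] u))
    (hg : LinearIndependent K (fun j : Fin t ↦ g^[j + 1] u)) :
    LinearIndependent K (Sum.elim (fun i : Fin s ↦ f^[i + 1] u) (fun j : Fin t ↦ g^[j] u)) := by
  rw [Fintype.linearIndependent_iff] at hf hg ⊢
  intro c hc
  rw [Fintype.sum_sum_type] at hc
  have hcg : ∀ j, c (Sum.inr j) = 0 := by
    -- applying `g` kills the `f`-part of the relation
    have hgc := congrArg g hc
    simp only [map_add, map_sum, map_smulₛₗ, Sum.elim_inl, Sum.elim_inr, map_zero,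
      iterate_succ_apply', hgf, smul_zero, Finset.sum_const_zero, zero_add] at hgc
    simp only [iterate_succ_apply'] at hg
    exact fun j ↦ τ₂.injective (by rw [hg _ hgc j, map_zero])
  simp only [Sum.elim_inr, hcg, zero_smul, Finset.sum_const_zero, add_zero, Sum.elim_inl] at hc
  rintro (i | j)
  · exact hf _ hc i
  · exact hcg j

theorem isLeast_card_span_eq_top [FiniteDimensional K V] :
    IsLeast {n | ∃ x : Fin n → V, span K (range x) = ⊤} (finrank K V) :=
  ⟨⟨finBasis K V, (finBasis K V).span_eq⟩, fun _ ⟨_, hx⟩ ↦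
    (finrank_le_of_span_eq_top hx).trans_eq (Fintype.card_fin _)⟩

theorem isLeast_card_sup_span_eq_top [FiniteDimensional K V] (U : Submodule K V) :
    IsLeast {n | ∃ x : Fin n → V, U ⊔ span K (range x) = ⊤} (finrank K (V ⧸ U)) := by
  convert isLeast_card_span_eq_top (K := K) (V := V ⧸ U) using 3 with n
  rw [U.mkQ_surjective.comp_left.exists]
  simp only [← map_mkQ_eq_top, map_span, range_comp]

end VectorSpace

section ModIdeal

variable {R : Type*} [CommRing R] {M : Type*} [AddCommGroup M] [Module R M] (I : Ideal R)

theorem smul_top_le_comap_smul_top {σ : R →+* R} (hσ : I ≤ I.comap σ) (f : M →ₛₗ[σ] M) :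
    I • (⊤ : Submodule R M) ≤ (I • (⊤ : Submodule R M)).comap f :=
  smul_le.2 fun a ha x _ ↦ by
    rw [mem_comap, map_smulₛₗ]
    exact smul_mem_smul (hσ ha) mem_top

def reduceMod {σ : R →+* R} (hσ : I ≤ I.comap σ) (f : M →ₛₗ[σ] M) :
    M ⧸ I • (⊤ : Submodule R M) →ₛₗ[Ideal.quotientMap I σ hσ] M ⧸ I • (⊤ : Submodule R M) where
  toFun := (I • (⊤ : Submodule R M)).mapQ (I • ⊤) f (smul_top_le_comap_smul_top I hσ f)
  map_add' := map_add _
  map_smul' := by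
    rintro ⟨a⟩ ⟨x⟩
    exact congrArg (Submodule.Quotient.mk (p := I • ⊤)) (map_smulₛₗ f a x)

theorem reduceMod_iterate_mk {σ : R →+* R} (hσ : I ≤ I.comap σ) (f : M →ₛₗ[σ] M) (n : ℕ) (x : M) :
    (reduceMod I hσ f)^[n] (Submodule.Quotient.mk x) = Submodule.Quotient.mk (f^[n] x) := by
  induction n generalizing x with
  | zero => rfl
  | succ n ih => rw [iterate_succ_apply, iterate_succ_apply]; exact ih (f x)

theorem span_sup_smul_top_eq_top_iff (s : Set M) :
    span R s ⊔ I • ⊤ = ⊤ ↔ span (R ⧸ I) ((I • (⊤ : Submodule R M)).mkQ '' s) = ⊤ := by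
  rw [sup_comm, ← map_mkQ_eq_top, map_span,
    ← restrictScalars_span R (R ⧸ I) Ideal.Quotient.mk_surjective, restrictScalars_eq_top_iff]

attribute [local instance] Ideal.Quotient.field

variable [I.IsMaximal]

theorem finrank_quotient_smul_top [Module.Free R M] [Module.Finite R M] :
    finrank (R ⧸ I) (M ⧸ I • (⊤ : Submodule R M)) = finrank R M := by
  have := (Ideal.Quotient.mk I).domain_nontrivial
  rw [← (LinearEquiv.extendScalarsOfSurjective (S := R ⧸ I) Ideal.Quotient.mk_surjective
    (TensorProduct.quotTensorEquivQuotSMul M I)).finrank_eq, finrank_baseChange]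

theorem isLeast_card_sup_span_eq_top_of_linearIndependent [Module.Free R M] [Module.Finite R M]
    {ι : Type*} [Fintype ι] (y : ι → M)
    (hy : LinearIndependent (R ⧸ I) ((I • (⊤ : Submodule R M)).mkQ ∘ y)) :
    IsLeast {n | ∃ x : Fin n → M, span R (range y) ⊔ I • ⊤ ⊔ span R (range x) = ⊤}
      (finrank R M - Fintype.card ι) := by
  set U := span (R ⧸ I) (range ((I • (⊤ : Submodule R M)).mkQ ∘ y))
  have hU : finrank (R ⧸ I) (_ ⧸ U) = finrank R M - Fintype.card ι := by
    rw [← finrank_quotient_smul_top I, ← U.finrank_quotient_add_finrank, finrank_span_eq_card hy,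
      Nat.add_sub_cancel]
  rw [← hU]
  convert isLeast_card_sup_span_eq_top U using 3 with n
  rw [(mkQ_surjective _).comp_left.exists]
  refine exists_congr fun x ↦ ?_
  rw [sup_right_comm, ← span_union, span_sup_smul_top_eq_top_iff, image_union, span_union,
    ← range_comp, ← range_comp]

theorem linearIndependent_of_span_eq_top_of_linearIndependent_mkQ [Module.Free R M]
    [Module.Finite R M] {ι : Type*} [Fintype ι] {v : ι → M} (hspan : span R (range v) = ⊤)
    (hv : LinearIndependent (R ⧸ I) ((I • (⊤ : Submodule R M)).mkQ ∘ v)) :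
    LinearIndependent R v :=
  linearIndependent_of_top_le_span_of_card_le_finrank hspan.ge
    (finrank_quotient_smul_top (M := M) I ▸ hv.fintype_card_le_finrank)

theorem eq_top_of_sup_smul_top_eq_top [IsLocalRing R] [Module.Finite R M] {N : Submodule R M}
    (h : N ⊔ I • ⊤ = ⊤) : N = ⊤ :=
  top_le_iff.1 <| le_of_le_smul_of_le_jacobson_bot Module.Finite.fg_top
    (by rw [IsLocalRing.jacobson_eq_maximalIdeal ⊥ bot_ne_top]
        exact IsLocalRing.le_maximalIdeal (Ideal.IsMaximal.ne_top ‹_›)) h.ge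

theorem linearIndependent_mkQ_iterate {σ : R →+* R} (hσ : I ≤ I.comap σ) (f : M →ₛₗ[σ] M)
    {s : ℕ} {u : M} (hs : f^[s] u ∈ I • (⊤ : Submodule R M))
    (hlt : ∀ i < s, f^[i] u ∉ I • (⊤ : Submodule R M)) :
    LinearIndependent (R ⧸ I) ((I • (⊤ : Submodule R M)).mkQ ∘ fun i : Fin s ↦ f^[i] u) := by
  simp only [comp_def, mkQ_apply, ← reduceMod_iterate_mk I hσ f, ← Quotient.mk_eq_zero] at hs hlt ⊢
  exact linearIndependent_iterate _ hs hlt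

theorem linearIndependent_mkQ_sumElim_iterate {σ τ : R →+* R} (hσ : I ≤ I.comap σ)
    (hτ : I ≤ I.comap τ) (f : M →ₛₗ[σ] M) (g : M →ₛₗ[τ] M)
    (hgf : ∀ x, g (f x) ∈ I • (⊤ : Submodule R M)) {s t : ℕ} {z : M}
    (hf : LinearIndependent (R ⧸ I) ((I • (⊤ : Submodule R M)).mkQ ∘ fun i : Fin s ↦ f^[i + 1] z))
    (hg : LinearIndependent (R ⧸ I) ((I • (⊤ : Submodule R M)).mkQ ∘ fun j : Fin t ↦ g^[j + 1] z)) :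
    LinearIndependent (R ⧸ I) ((I • (⊤ : Submodule R M)).mkQ ∘
      Sum.elim (fun i : Fin s ↦ f^[i + 1] z) (fun j : Fin t ↦ g^[j] z)) := by
  rw [Sum.comp_elim]
  simp only [comp_def, mkQ_apply, ← reduceMod_iterate_mk I hσ f,
    ← reduceMod_iterate_mk I hτ g] at hf hg ⊢
  refine linearIndependent_sumElim_iterate _ _ ?_ hf hg
  rintro ⟨x⟩
  exact (Quotient.mk_eq_zero _).2 (hgf x)

end ModIdeal

section Cyclic

variable {R : Type*} [CommRing R] {M : Type*} [AddCommGroup M] [Module R M]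

theorem span_iterate_union_le_comap {σ τ : R →+* R} (f : M →ₛₗ[σ] M) (g : M →ₛₗ[τ] M) {π : R}
    (hfg : ∀ x, f (g x) = π • x) (z : M) :
    span R (range (f^[·] z) ∪ range (g^[·] z)) ≤
      (span R (range (f^[·] z) ∪ range (g^[·] z))).comap f := by
  rw [span_le]
  rintro _ (⟨n, rfl⟩ | ⟨_ | n, rfl⟩) <;> rw [SetLike.mem_coe, mem_comap]
  · exact subset_span (Or.inl ⟨n + 1, iterate_succ_apply' f n z⟩)
  · exact subset_span (Or.inl ⟨1, rfl⟩)
  · dsimp only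
    rw [iterate_succ_apply', hfg]
    exact smul_mem _ _ (subset_span (Or.inr ⟨n, rfl⟩))

theorem span_iterate_union_eq_top {σ τ : R →+* R} (f : M →ₛₗ[σ] M) (g : M →ₛₗ[τ] M) {π : R}
    (hfg : ∀ x, f (g x) = π • x) (hgf : ∀ x, g (f x) = π • x) {z : M}
    (hz : ∀ P : Submodule R M, z ∈ P → (∀ x ∈ P, f x ∈ P) → (∀ x ∈ P, g x ∈ P) → P = ⊤) :
    span R (range (f^[·] z) ∪ range (g^[·] z)) = ⊤ :=
  hz _ (subset_span (Or.inl ⟨0, rfl⟩)) (span_iterate_union_le_comap f g hfg z) fun x hx ↦ by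
    rw [union_comm] at hx ⊢
    exact span_iterate_union_le_comap g f hgf z hx

theorem span_range_eq_span_iterate_sup {σ τ : R →+* R} (f : M →ₛₗ[σ] M) (g : M →ₛₗ[τ] M) {π : R}
    (hfg : ∀ x, f (g x) = π • x) {z : M} (hP : span R (range (f^[·] z) ∪ range (g^[·] z)) = ⊤)
    {s : ℕ} (hs : ∀ n, s < n → f^[n] z ∈ Ideal.span {π} • (⊤ : Submodule R M)) :
    span R (range f) = span R (range fun i : Fin s ↦ f^[i + 1] z) ⊔ Ideal.span {π} • ⊤ := by
  set N := Ideal.span {π} • (⊤ : Submodule R M)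
  have hiter (n : ℕ) : f^[n + 1] z ∈ span R (range fun i : Fin s ↦ f^[i + 1] z) ⊔ N := by
    rcases lt_or_ge n s with h | h
    · exact mem_sup_left (subset_span ⟨⟨n, h⟩, rfl⟩)
    · exact mem_sup_right (hs _ (by omega))
  refine le_antisymm (span_le.2 ?_) (sup_le (span_mono ?_) (smul_le.2 fun a ha x _ ↦ ?_))
  · rintro _ ⟨x, rfl⟩
    have hQ : span R (range (f^[·] z) ∪ range (g^[·] z)) ≤
        comap f (span R (range fun i : Fin s ↦ f^[i + 1] z) ⊔ N) := by
      rw [span_le]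
      rintro _ (⟨n, rfl⟩ | ⟨_ | n, rfl⟩) <;> rw [SetLike.mem_coe, mem_comap]
      · rw [← iterate_succ_apply' f]
        exact hiter n
      · exact hiter 0
      · dsimp only
        rw [iterate_succ_apply', hfg]
        exact mem_sup_right (smul_mem_smul (Ideal.mem_span_singleton_self π) mem_top)
    exact hQ (hP ▸ mem_top)
  · rintro _ ⟨i, rfl⟩
    exact ⟨_, (iterate_succ_apply' f i z).symm⟩
  · obtain ⟨b, rfl⟩ := Ideal.mem_span_singleton'.1 ha
    rw [mul_smul, ← hfg]
    exact smul_mem _ _ (subset_span ⟨_, rfl⟩)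

theorem mem_range_of_map_mem_smul_top {σ τ : R →+* R} (f : M →ₛₗ[σ] M) (g : M →ₛₗ[τ] M) {π : R}
    (hfg : ∀ x, f (g x) = π • x) (hgf : ∀ x, g (f x) = π • x) (hπ : IsSMulRegular M π) {x : M}
    (hx : g x ∈ Ideal.span {π} • (⊤ : Submodule R M)) : x ∈ range f := by
  rw [ideal_span_singleton_smul, mem_smul_pointwise_iff_exists] at hx
  obtain ⟨y, -, hy⟩ := hx
  refine ⟨y, hπ (?_ : π • f y = π • x)⟩
  rw [← hfg, ← hfg, hgf, hy]

theorem span_sumElim_iterate_sup_eq_top (f g : M → M) {z : M}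
    (hP : span R (range (f^[·] z) ∪ range (g^[·] z)) = ⊤) {N : Submodule R M} {s t : ℕ}
    (hf : span R (range f) ≤ span R (range fun i : Fin s ↦ f^[i + 1] z) ⊔ N)
    (hgt : g^[t] z ∈ range f) (hg : ∀ n, t < n → g^[n] z ∈ N) :
    span R (range (Sum.elim (fun i : Fin s ↦ f^[i + 1] z) (fun j : Fin t ↦ g^[j] z))) ⊔ N = ⊤ := by
  set G := Sum.elim (fun i : Fin s ↦ f^[i + 1] z) (fun j : Fin t ↦ g^[j] z)
  have hfG : span R (range f) ≤ span R (range G) ⊔ N := by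
    refine hf.trans (sup_le_sup_right (span_mono ?_) N)
    rintro _ ⟨i, rfl⟩
    exact ⟨Sum.inl i, rfl⟩
  have hgG (n : ℕ) : g^[n] z ∈ span R (range G) ⊔ N := by
    rcases lt_trichotomy n t with h | rfl | h
    · exact mem_sup_left (subset_span ⟨Sum.inr ⟨n, h⟩, rfl⟩)
    · exact hfG (subset_span hgt)
    · exact mem_sup_right (hg n h)
  rw [eq_top_iff, ← hP, span_le]
  rintro _ (⟨_ | n, rfl⟩ | ⟨n, rfl⟩)
  · exact hgG 0
  · exact hfG (subset_span ⟨f^[n] z, (iterate_succ_apply' f n z).symm⟩)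
  · exact hgG n

theorem exists_minimal_iterate_succ_mem {f : M → M} {π : R}
    (h : ∃ n, ∀ x, ∃ y, f^[n] x = π • y) (z : M) :
    ∃ s, f^[s + 1] z ∈ Ideal.span {π} • (⊤ : Submodule R M) ∧
      ∀ i < s, f^[i + 1] z ∉ Ideal.span {π} • (⊤ : Submodule R M) := by
  classical
  have hex : ∃ n, f^[n + 1] z ∈ Ideal.span {π} • (⊤ : Submodule R M) := by
    obtain ⟨n, hn⟩ := h
    obtain ⟨y, hy⟩ := hn (f z)
    refine ⟨n, ?_⟩
    rw [iterate_succ_apply, hy]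
    exact smul_mem_smul (Ideal.mem_span_singleton_self π) mem_top
  exact ⟨Nat.find hex, Nat.find_spec hex, fun i ↦ Nat.find_min hex⟩

attribute [local instance] Ideal.Quotient.field

theorem exists_basis_iterate_and_isLeast [IsLocalRing R] {π : R} [(Ideal.span {π}).IsMaximal]
    [Module.Free R M] [Module.Finite R M] (hπ : IsSMulRegular M π) {σ τ : R →+* R}
    (hσ : Ideal.span {π} ≤ (Ideal.span {π}).comap σ)
    (hτ : Ideal.span {π} ≤ (Ideal.span {π}).comap τ)
    (f : M →ₛₗ[σ] M) (g : M →ₛₗ[τ] M) (hfg : ∀ x, f (g x) = π • x) (hgf : ∀ x, g (f x) = π • x)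
    {z : M} (hz : ∀ P : Submodule R M, z ∈ P → (∀ x ∈ P, f x ∈ P) → (∀ x ∈ P, g x ∈ P) → P = ⊤)
    {s t : ℕ} (hs : f^[s + 1] z ∈ Ideal.span {π} • (⊤ : Submodule R M))
    (hslt : ∀ i < s, f^[i + 1] z ∉ Ideal.span {π} • (⊤ : Submodule R M))
    (ht : g^[t + 1] z ∈ Ideal.span {π} • (⊤ : Submodule R M))
    (htlt : ∀ i < t, g^[i + 1] z ∉ Ideal.span {π} • (⊤ : Submodule R M)) :
    ∃ b : Basis (Fin s ⊕ Fin t) R M,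
      ⇑b = Sum.elim (fun i : Fin s ↦ f^[i + 1] z) (fun j : Fin t ↦ g^[j] z) ∧
      IsLeast {n | ∃ x : Fin n → M, span R (range f) ⊔ span R (range x) = ⊤} t ∧
      IsLeast {n | ∃ x : Fin n → M, span R (range g) ⊔ span R (range x) = ⊤} s := by
  set I := Ideal.span {π}
  have hP := span_iterate_union_eq_top f g hfg hgf hz
  have hfspan := span_range_eq_span_iterate_sup f g hfg hP fun n hn ↦
    iterate_mem_of_le (smul_top_le_comap_smul_top I hσ f) hs hn
  have hgspan := span_range_eq_span_iterate_sup g f hgf (by rwa [union_comm]) fun n hn ↦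
    iterate_mem_of_le (smul_top_le_comap_smul_top I hτ g) ht hn
  have hfI : LinearIndependent (R ⧸ I) ((I • (⊤ : Submodule R M)).mkQ ∘
      fun i : Fin s ↦ f^[i + 1] z) := linearIndependent_mkQ_iterate I hσ f hs hslt
  have hgI : LinearIndependent (R ⧸ I) ((I • (⊤ : Submodule R M)).mkQ ∘
      fun j : Fin t ↦ g^[j + 1] z) := linearIndependent_mkQ_iterate I hτ g ht htlt
  have hGspan := eq_top_of_sup_smul_top_eq_top I <| span_sumElim_iterate_sup_eq_top f g hP
    hfspan.le (mem_range_of_map_mem_smul_top f g hfg hgf hπ (by rwa [← iterate_succ_apply' g]))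
    fun n hn ↦ iterate_mem_of_le (smul_top_le_comap_smul_top I hτ g) ht hn
  have hG := linearIndependent_of_span_eq_top_of_linearIndependent_mkQ I hGspan <|
    linearIndependent_mkQ_sumElim_iterate I hσ hτ f g
      (fun x ↦ hgf x ▸ smul_mem_smul (Ideal.mem_span_singleton_self π) mem_top) hfI hgI
  have hrank : finrank R M = s + t := by
    rw [finrank_eq_card_basis (Basis.mk hG hGspan.ge), Fintype.card_sum, Fintype.card_fin,
      Fintype.card_fin]
  refine ⟨Basis.mk hG hGspan.ge, Basis.coe_mk _ _, ?_, ?_⟩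
  · rw [hfspan]
    convert isLeast_card_sup_span_eq_top_of_linearIndependent I _ hfI using 1
    simp [hrank]
  · rw [hgspan]
    convert isLeast_card_sup_span_eq_top_of_linearIndependent I _ hgI using 1
    simp [hrank]

end Cyclic

variable (p : ℕ) [Fact p.Prime] (k : Type*) [Field k] [IsAlgClosed k] [CharP k p]
variable (M : Type*) [AddCommGroup M] [Module (WittVector p k) M]

theorem basis_of_cyclic_dieudonne_module
    -- `M` is a free `W(k)`-module of finite rank
    [Module.Free (WittVector p k) M] [Module.Finite (WittVector p k) M]
    -- `F` is `σ`-semilinear, `V` is `σ⁻¹`-semilinear, and `F ∘ V = V ∘ F = p·id`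
    (F V : M → M)
    (hFadd : ∀ x y, F (x + y) = F x + F y)
    (hVadd : ∀ x y, V (x + y) = V x + V y)
    (hFsmul : ∀ (a : WittVector p k) (x : M), F (a • x) = WittVector.frobeniusEquiv p k a • F x)
    (hVsmul : ∀ (a : WittVector p k) (x : M),
      V (a • x) = (WittVector.frobeniusEquiv p k).symm a • V x)
    (hFV : ∀ x, F (V x) = (p : WittVector p k) • x)
    (hVF : ∀ x, V (F x) = (p : WittVector p k) • x)
    -- `M` is bi-nilpotent: `F` and `V` are nilpotent on `M/pM`
    (hFnil : ∃ n : ℕ, ∀ x : M, ∃ y : M, F^[n] x = (p : WittVector p k) • y)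
    (hVnil : ∃ n : ℕ, ∀ x : M, ∃ y : M, V^[n] x = (p : WittVector p k) • y)
    -- `z` generates `M`: the only `W(k)`-submodule containing `z` stable under `F` and `V` is `M`
    (z : M)
    (hz : ∀ P : Submodule (WittVector p k) M,
      z ∈ P → (∀ x ∈ P, F x ∈ P) → (∀ x ∈ P, V x ∈ P) → P = ⊤)
    -- `d = dim_k (M/FM)`: `d` is the least number of elements generating `M` over `FM`
    (c d : ℕ)
    (hd : IsLeast {n : ℕ | ∃ x : Fin n → M,
      Submodule.span (WittVector p k) (Set.range F) ⊔
        Submodule.span (WittVector p k) (Set.range x) = ⊤} d)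
    -- `c = dim_k (M/VM)`
    (hc : IsLeast {n : ℕ | ∃ x : Fin n → M,
      Submodule.span (WittVector p k) (Set.range V) ⊔
        Submodule.span (WittVector p k) (Set.range x) = ⊤} c) :
    (∃ bas : Module.Basis (Fin c ⊕ Fin d) (WittVector p k) M,
      (∀ i : Fin c, bas (Sum.inl i) = F^[(i : ℕ) + 1] z) ∧
      (∀ i : Fin d, bas (Sum.inr i) = V^[(i : ℕ)] z)) ∧
    Module.finrank (WittVector p k) M = c + d := by
  have : IsDiscreteValuationRing (WittVector p k) := WittVector.isDiscreteValuationRing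
  have : (Ideal.span {(p : WittVector p k)}).IsMaximal :=
    (WittVector.irreducible p (k := k)).maximalIdeal_eq ▸ IsLocalRing.maximalIdeal.isMaximal _
  have hp (τ : WittVector p k →+* WittVector p k) :
      Ideal.span {(p : WittVector p k)} ≤ (Ideal.span {(p : WittVector p k)}).comap τ := by
    rw [Ideal.span_singleton_le_iff_mem, Ideal.mem_comap, map_natCast]
    exact Ideal.mem_span_singleton_self _
  have hpreg : IsSMulRegular M (p : WittVector p k) :=
    Module.IsTorsionFree.isSMulRegular (IsRegular.of_ne_zero (WittVector.p_nonzero p k))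
  let F' : M →ₛₗ[(WittVector.frobeniusEquiv p k : WittVector p k →+* WittVector p k)] M :=
    ⟨⟨F, hFadd⟩, hFsmul⟩
  let V' : M →ₛₗ[((WittVector.frobeniusEquiv p k).symm : WittVector p k →+* WittVector p k)] M :=
    ⟨⟨V, hVadd⟩, hVsmul⟩
  obtain ⟨s, hs, hslt⟩ := exists_minimal_iterate_succ_mem hFnil z
  obtain ⟨t, ht, htlt⟩ := exists_minimal_iterate_succ_mem hVnil z
  obtain ⟨b, hb, hdt, hcs⟩ := exists_basis_iterate_and_isLeast hpreg (hp _) (hp _) F' V' hFV hVF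
    hz hs hslt ht htlt
  obtain rfl := hd.unique hdt
  obtain rfl := hc.unique hcs
  refine ⟨⟨b, fun i ↦ congrFun hb (Sum.inl i), fun j ↦ congrFun hb (Sum.inr j)⟩, ?_⟩
  rw [finrank_eq_card_basis b, Fintype.card_sum, Fintype.card_fin, Fintype.card_fin]

end DieudonneStmt
end
end

section
/- Let M be a non-zero bi-nilpotent Dieudonné module over k which is generated by an element z ∈ M, with d = dim_k(M/FM) and c = dim_k(M/VM). Then there exist elements a_0, …, a_c and b_1, …, b_d of W such that a_0 and b_d are units in W, a_i ∈ pW for 1 ≤ i ≤ c, b_i ∈ pW for 1 ≤ i ≤ d−1, and Σ_{i=0}^{c} a_i·F^{c−i}z + Σ_{i=1}^{d} b_i·V^i z = 0 in M. -/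
/-!
Write `N = span (range V)`. Since `F` is nilpotent modulo `p` and `p • M = V (F M) ⊆ N`, some
`F^[n] z` lies in `N`; let `c₀` be the least such `n`. If `∑_{i<c₀} a i • F^[i] z ∈ N` with some
`a i` a unit, take the least such `i` and apply `F^[c₀-1-i]`: this puts `F^[c₀-1] z` in `N`.
So `z, …, F^[c₀-1] z` are independent modulo `N` over the residue field, and they span `M / N`
because `N + span {F^[j] z}` is stable under `F` and `V`. Hence `c₀ = c`, and symmetrically
`V^[d] z ∈ span (range F)` with `d` minimal.

As `V` maps `span (range F)` into `p • M`, Nakayama shows that `M` is generated by the `F^[i] z`,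
`i < c`, and the `V^[j] z`, `1 ≤ j ≤ d`. Expanding `F^[c] z` in these generators and reducing
modulo `N` and modulo `span (range F)` puts every coefficient except that of `V^[d] z` into `pW`.
If that one were in `pW` too, then `F^[c] z ∈ p • M`, say `F^[c] z = p • y = F (V y)`; applying
`V` and cancelling `p` (`M` is torsion-free) gives `F^[c-1] z = V y ∈ N`, contradicting minimality.
-/

noncomputable section

namespace DieudonneStmt

section General

open IsLocalRing Submodule

variable {R : Type*} [CommRing R] {M : Type*} [AddCommGroup M] [Module R M]

variable (R) in
abbrev IsGeneratedBy (F V : M → M) (z : M) : Prop :=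
  ∀ P : Submodule R M, z ∈ P → (∀ x ∈ P, F x ∈ P) → (∀ x ∈ P, V x ∈ P) → P = ⊤

theorem IsGeneratedBy.swap {F V : M → M} {z : M} (h : IsGeneratedBy R F V z) :
    IsGeneratedBy R V F z :=
  fun P hz hV hF => h P hz hF hV

abbrev IsLeastNumGenerators (N : Submodule R M) (c : ℕ) : Prop :=
  IsLeast {n : ℕ | ∃ x : Fin n → M, N ⊔ span R (Set.range x) = ⊤} c

theorem apply_mem_sup_span {σ : R →+* R} [RingHomSurjective σ] (f : M →ₛₗ[σ] M)
    {N N' : Submodule R M} (hf : Set.MapsTo f N N') {s t : Set M} (hst : f '' s ⊆ t) {x : M}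
    (hx : x ∈ N ⊔ span R s) : f x ∈ N' ⊔ span R t := by
  obtain ⟨y, hy, w, hw, rfl⟩ := mem_sup.1 hx
  rw [map_add]
  exact add_mem (mem_sup_left (hf hy))
    (mem_sup_right (span_mono hst (apply_mem_span_image_of_mem_span f hw)))

theorem exists_sum_eq_of_mem_span_image {ι : Type*} {v : ι → M} {s : Finset ι} {x : M}
    (hx : x ∈ span R (v '' s)) : ∃ a : ι → R, ∑ i ∈ s, a i • v i = x := by
  obtain ⟨l, hl, rfl⟩ := (Finsupp.mem_span_image_iff_linearCombination R).1 hx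
  refine ⟨l, ?_⟩
  rw [Finsupp.linearCombination_apply, Finsupp.sum_of_support_subset l
    (by exact_mod_cast (Finsupp.mem_supported R l).1 hl) _ fun i _ => zero_smul R (v i)]

theorem range_fin_eq_image_range {α : Type*} (f : ℕ → α) (n : ℕ) :
    Set.range (fun i : Fin n => f i) = f '' ↑(Finset.range n) := by
  rw [Finset.coe_range, ← Fin.range_val, ← Set.range_comp]
  rfl

theorem card_le_of_sup_span_eq_top [IsLocalRing R] {N : Submodule R M}
    (hN : maximalIdeal R • (⊤ : Submodule R M) ≤ N) {m n : ℕ} (v : Fin m → M)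
    (hv : ∀ a : Fin m → R, ∑ i, a i • v i ∈ N → ∀ i, a i ∈ maximalIdeal R)
    (x : Fin n → M) (hx : N ⊔ span R (Set.range x) = ⊤) : m ≤ n := by
  classical
  let K := R ⧸ maximalIdeal R
  have tor : Module.IsTorsionBySet R (M ⧸ N) (maximalIdeal R) :=
    (Module.isTorsionBySet_quotient_iff N _).2 fun y r hr => hN (smul_mem_smul hr trivial)
  let := tor.module
  have : IsScalarTower R K (M ⧸ N) := tor.isScalarTower
  let : Field K := Ideal.Quotient.field _
  have hli : LinearIndependent K (N.mkQ ∘ v) := by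
    rw [Fintype.linearIndependent_iff]
    intro g hg i
    choose a ha using fun i => Ideal.Quotient.mk_surjective (g i)
    have hsum : ∑ i, a i • v i ∈ N := by
      rw [← Quotient.mk_eq_zero, ← mkQ_apply, map_sum, ← hg]
      simp [← ha, tor.mk_smul]
    rw [← ha, Ideal.Quotient.eq_zero_iff_mem]
    exact hv a hsum i
  have hspan : Set.range (N.mkQ ∘ v) ≤ span K (Set.range (N.mkQ ∘ x)) := by
    rintro _ ⟨i, rfl⟩
    obtain ⟨y, hy, w, hw, hyw⟩ := mem_sup.1 (hx ▸ mem_top : v i ∈ N ⊔ span R (Set.range x))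
    have hw' := span_le_restrictScalars R K _ (apply_mem_span_image_of_mem_span N.mkQ hw)
    rw [Set.range_comp]
    simpa [← hyw, (Quotient.mk_eq_zero N).2 hy] using hw'
  simpa using (linearIndependent_le_span' _ hli _ hspan).trans
    (Nat.cast_le.2 (Fintype.card_range_le (N.mkQ ∘ x)))

theorem iterate_mem_of_le_s1 {α : Type*} {f : α → α} {s : Set α} (hf : Set.MapsTo f s s) {x : α}
    {c : ℕ} (hc : f^[c] x ∈ s) {j : ℕ} (hj : c ≤ j) : f^[j] x ∈ s := by
  obtain ⟨j, rfl⟩ := Nat.exists_eq_add_of_le hj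
  rw [add_comm, Function.iterate_add_apply]
  exact hf.iterate j hc

theorem sup_span_iterate_eq_top {F : M → M} {N : Submodule R M} (hFN : Set.MapsTo F N N) {z : M}
    {c : ℕ} (hc : F^[c] z ∈ N)
    (htop : N ⊔ span R (Set.range fun j => F^[j] z) = ⊤) :
    N ⊔ span R ((fun j => F^[j] z) '' ↑(Finset.range c)) = ⊤ := by
  refine top_le_iff.1 (htop ▸ sup_le le_sup_left (span_le.2 ?_))
  rintro _ ⟨j, rfl⟩
  by_cases hj : j < c
  · exact mem_sup_right (subset_span ⟨j, Finset.mem_coe.2 (Finset.mem_range.2 hj), rfl⟩)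
  · exact mem_sup_left (iterate_mem_of_le_s1 hFN hc (not_lt.1 hj))

theorem iterate_mem_span_range {f : M → M} {i : ℕ} (hi : i ≠ 0) (x : M) :
    f^[i] x ∈ span R (Set.range f) := by
  obtain ⟨i, rfl⟩ := Nat.exists_eq_succ_of_ne_zero hi
  rw [Function.iterate_succ_apply']
  exact subset_span ⟨_, rfl⟩

section Iterates

variable {σ : R →+* R} [RingHomSurjective σ] (F : M →ₛₗ[σ] M) {N : Submodule R M}
  {z : M} {c : ℕ}

theorem iterate_succ_mem_sup_span_Ioi (hFN : Set.MapsTo F N N) {i : ℕ}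
    (hi : F^[i] z ∈ N ⊔ span R ((fun j => F^[j] z) '' Set.Ioi i)) :
    F^[i + 1] z ∈ N ⊔ span R ((fun j => F^[j] z) '' Set.Ioi (i + 1)) := by
  rw [Function.iterate_succ_apply']
  refine apply_mem_sup_span F hFN ?_ hi
  rintro _ ⟨_, ⟨j, hj, rfl⟩, rfl⟩
  exact ⟨j + 1, Nat.succ_lt_succ hj, Function.iterate_succ_apply' F j z⟩

theorem iterate_notMem_sup_span_Ioi (hFN : Set.MapsTo F N N) (hc : F^[c] z ∈ N)
    (hmin : ∀ i < c, F^[i] z ∉ N) {i : ℕ} (hi : i < c) :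
    F^[i] z ∉ N ⊔ span R ((fun j => F^[j] z) '' Set.Ioi i) := by
  intro h
  have hstep : ∀ n, F^[i + n] z ∈ N ⊔ span R ((fun j => F^[j] z) '' Set.Ioi (i + n)) := by
    intro n
    induction n with
    | zero => exact h
    | succ n ih => exact iterate_succ_mem_sup_span_Ioi F hFN ih
  have hspan : span R ((fun j => F^[j] z) '' Set.Ioi (c - 1)) ≤ N := by
    refine span_le.2 ?_
    rintro _ ⟨j, hj, rfl⟩
    exact iterate_mem_of_le_s1 hFN hc (by simp only [Set.mem_Ioi] at hj; omega)
  have := hstep (c - 1 - i)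
  rw [show i + (c - 1 - i) = c - 1 by omega, sup_eq_left.2 hspan] at this
  exact hmin (c - 1) (by omega) this

theorem coeff_mem_maximalIdeal_of_sum_mem [IsLocalRing R]
    (hN : maximalIdeal R • (⊤ : Submodule R M) ≤ N) (hFN : Set.MapsTo F N N)
    (hc : F^[c] z ∈ N) (hmin : ∀ i < c, F^[i] z ∉ N) {s : Finset ℕ} (hs : ∀ i ∈ s, i < c)
    {a : ℕ → R} (ha : ∑ i ∈ s, a i • F^[i] z ∈ N) : ∀ i ∈ s, a i ∈ maximalIdeal R := by
  by_contra! hbad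
  classical
  let i₀ := Nat.find hbad
  obtain ⟨hi₀s, hi₀⟩ : i₀ ∈ s ∧ a i₀ ∉ maximalIdeal R := Nat.find_spec hbad
  set S := N ⊔ span R ((fun j => F^[j] z) '' Set.Ioi i₀)
  have hrest : ∑ i ∈ s.erase i₀, a i • F^[i] z ∈ S := by
    refine sum_mem fun i hi => ?_
    obtain ⟨hne, his⟩ := Finset.mem_erase.1 hi
    rcases hne.lt_or_gt with hlt | hgt
    · have : a i ∈ maximalIdeal R := by_contra fun h => Nat.find_min hbad hlt ⟨his, h⟩
      exact mem_sup_left (hN (smul_mem_smul this trivial))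
    · exact mem_sup_right (smul_mem _ _ (subset_span ⟨i, hgt, rfl⟩))
  rw [← Finset.add_sum_erase s _ hi₀s] at ha
  have hlead : a i₀ • F^[i₀] z ∈ S := (Submodule.add_mem_iff_left S hrest).1 (mem_sup_left ha)
  exact iterate_notMem_sup_span_Ioi F hFN hc hmin (hs i₀ hi₀s)
    ((smul_mem_iff_of_isUnit S (notMem_maximalIdeal.1 hi₀)).1 hlead)

end Iterates

section Dieudonne

variable [IsLocalRing R] {π : R} {σ τ : R →+* R} [RingHomSurjective σ] [RingHomSurjective τ]

theorem mem_maximalIdeal_smul_top_iff (hπ : maximalIdeal R = Ideal.span {π}) {x : M} :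
    x ∈ maximalIdeal R • (⊤ : Submodule R M) ↔ ∃ y, π • y = x := by
  simp [hπ, ideal_span_singleton_smul, mem_smul_pointwise_iff_exists]

theorem maximalIdeal_smul_top_le_span_range (hπ : maximalIdeal R = Ideal.span {π})
    {F V : M → M} (hVF : ∀ x, V (F x) = π • x) :
    maximalIdeal R • (⊤ : Submodule R M) ≤ span R (Set.range V) := by
  intro x hx
  obtain ⟨y, rfl⟩ := (mem_maximalIdeal_smul_top_iff hπ).1 hx
  exact subset_span ⟨F y, hVF y⟩

theorem mapsTo_span_range_maximalIdeal_smul (hπ : maximalIdeal R = Ideal.span {π})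
    (F : M →ₛₗ[σ] M) {V : M → M}
    (hFV : ∀ x, F (V x) = π • x) :
    Set.MapsTo F (span R (Set.range V)) ↑(maximalIdeal R • ⊤ : Submodule R M) := by
  intro x hx
  refine span_le.2 ?_ (apply_mem_span_image_of_mem_span F hx)
  rintro _ ⟨_, ⟨y, rfl⟩, rfl⟩
  exact (mem_maximalIdeal_smul_top_iff hπ).2 ⟨y, (hFV y).symm⟩

theorem mapsTo_span_range (hπ : maximalIdeal R = Ideal.span {π})
    (F : M →ₛₗ[σ] M) {V : M → M}
    (hFV : ∀ x, F (V x) = π • x) (hVF : ∀ x, V (F x) = π • x) :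
    Set.MapsTo F (span R (Set.range V)) (span R (Set.range V)) := fun _ hx =>
  maximalIdeal_smul_top_le_span_range hπ hVF (mapsTo_span_range_maximalIdeal_smul hπ F hFV hx)

theorem mem_range_of_apply_mem_maximalIdeal_smul (hπ : maximalIdeal R = Ideal.span {π})
    (hπM : IsSMulRegular M π) {F V : M → M} (hFV : ∀ x, F (V x) = π • x)
    (hVF : ∀ x, V (F x) = π • x) {x : M} (hx : F x ∈ maximalIdeal R • (⊤ : Submodule R M)) :
    x ∈ Set.range V := by
  obtain ⟨y, hy⟩ := (mem_maximalIdeal_smul_top_iff hπ).1 hx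
  refine ⟨y, hπM ?_⟩
  calc π • V y = V (F (V y)) := (hVF _).symm
    _ = V (F x) := by rw [hFV, hy]
    _ = π • x := hVF x

/-- Nakayama: a surjective `V` that is nilpotent modulo `π` would force `M = 0`. -/
theorem span_range_ne_top [Module.Finite R M] [Nontrivial M] (hπ : π ∈ maximalIdeal R)
    (V : M →ₛₗ[τ] M)
    (hVnil : ∃ n : ℕ, ∀ x : M, ∃ y : M, V^[n] x = π • y) :
    span R (Set.range V) ≠ ⊤ := by
  intro h
  have hsurj : Function.Surjective V := by
    rw [← LinearMap.range_eq_top, ← h, ← LinearMap.coe_range, span_eq]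
  obtain ⟨n, hn⟩ := hVnil
  have hle : (⊤ : Submodule R M) ≤ maximalIdeal R • ⊤ := by
    intro x _
    obtain ⟨x', rfl⟩ := hsurj.iterate n x
    obtain ⟨y, hy⟩ := hn x'
    exact hy ▸ smul_mem_smul hπ trivial
  exact bot_ne_top (eq_bot_of_le_smul_of_le_jacobson_bot _ ⊤ Module.Finite.fg_top hle
    (maximalIdeal_le_jacobson ⊥)).symm

theorem sup_span_range_iterate_eq_top (hπ : maximalIdeal R = Ideal.span {π})
    (F : M →ₛₗ[σ] M) {V : M → M} (hFV : ∀ x, F (V x) = π • x) (hVF : ∀ x, V (F x) = π • x)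
    {z : M} (hz : IsGeneratedBy R F V z) :
    span R (Set.range V) ⊔ span R (Set.range fun j => F^[j] z) = ⊤ := by
  refine hz _ (mem_sup_right (subset_span ⟨0, rfl⟩)) (fun x hx => ?_)
    (fun x _ => mem_sup_left (subset_span ⟨x, rfl⟩))
  refine apply_mem_sup_span F (mapsTo_span_range hπ F hFV hVF) ?_ hx
  rintro _ ⟨_, ⟨j, rfl⟩, rfl⟩
  exact ⟨j + 1, Function.iterate_succ_apply' F j z⟩

theorem isLeast_of_iterate_mem_span_range (hπ : maximalIdeal R = Ideal.span {π})
    (F : M →ₛₗ[σ] M) {V : M → M} (hFV : ∀ x, F (V x) = π • x) (hVF : ∀ x, V (F x) = π • x)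
    {z : M} (hz : IsGeneratedBy R F V z)
    {c : ℕ} (hc : F^[c] z ∈ span R (Set.range V))
    (hmin : ∀ i < c, F^[i] z ∉ span R (Set.range V)) :
    IsLeastNumGenerators (span R (Set.range V)) c := by
  have hFN := mapsTo_span_range hπ F hFV hVF
  have hN := maximalIdeal_smul_top_le_span_range hπ hVF
  refine ⟨⟨fun i => F^[i] z, ?_⟩, fun n ⟨x, hx⟩ => ?_⟩
  · rw [range_fin_eq_image_range (fun i => F^[i] z)]
    exact sup_span_iterate_eq_top hFN hc (sup_span_range_iterate_eq_top hπ F hFV hVF hz)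
  refine card_le_of_sup_span_eq_top hN (fun i : Fin c => F^[i] z) (fun a ha i => ?_) x hx
  have := coeff_mem_maximalIdeal_of_sum_mem F hN hFN hc hmin (s := Finset.range c)
    (fun i => Finset.mem_range.1) (a := Function.extend Fin.val a 0) ?_ i
    (Finset.mem_range.2 i.2)
  · rwa [Fin.val_injective.extend_apply] at this
  · rwa [← Fin.sum_univ_eq_sum_range (fun i => Function.extend Fin.val a 0 i • F^[i] z),
      Finset.sum_congr rfl fun i _ => by rw [Fin.val_injective.extend_apply]]

theorem iterate_mem_span_range_of_isLeast [Module.Finite R M] [Nontrivial M]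
    (hπ : maximalIdeal R = Ideal.span {π}) (F : M →ₛₗ[σ] M) (V : M →ₛₗ[τ] M)
    (hFV : ∀ x, F (V x) = π • x) (hVF : ∀ x, V (F x) = π • x)
    (hFnil : ∃ n : ℕ, ∀ x : M, ∃ y : M, F^[n] x = π • y)
    (hVnil : ∃ n : ℕ, ∀ x : M, ∃ y : M, V^[n] x = π • y)
    {z : M} (hz : IsGeneratedBy R F V z)
    {c : ℕ} (hc : IsLeastNumGenerators (span R (Set.range V)) c) :
    0 < c ∧ F^[c] z ∈ span R (Set.range V) ∧ ∀ i < c, F^[i] z ∉ span R (Set.range V) := by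
  classical
  have hc0 : c ≠ 0 := by
    rintro rfl
    obtain ⟨x, hx⟩ := hc.1
    rw [Set.range_eq_empty x, span_empty, sup_bot_eq] at hx
    exact span_range_ne_top (hπ ▸ Ideal.mem_span_singleton_self π) V hVnil hx
  have hex : ∃ n, F^[n] z ∈ span R (Set.range V) := by
    obtain ⟨n, hn⟩ := hFnil
    obtain ⟨y, hy⟩ := hn z
    exact ⟨n, maximalIdeal_smul_top_le_span_range hπ hVF
      ((mem_maximalIdeal_smul_top_iff hπ).2 ⟨y, hy.symm⟩)⟩
  obtain rfl : c = Nat.find hex := hc.unique (isLeast_of_iterate_mem_span_range hπ F hFV hVF hz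
    (Nat.find_spec hex) fun i => Nat.find_min hex)
  exact ⟨Nat.pos_of_ne_zero hc0, Nat.find_spec hex, fun i => Nat.find_min hex⟩

theorem sup_span_iterates_eq_top [Module.Finite R M] (hπ : maximalIdeal R = Ideal.span {π})
    {F : M → M} (V : M →ₛₗ[τ] M) (hVF : ∀ x, V (F x) = π • x) {z : M} {c d : ℕ}
    (hFspan : span R (Set.range V) ⊔ span R ((fun i => F^[i] z) '' ↑(Finset.range c)) = ⊤)
    (hVspan : span R (Set.range F) ⊔ span R ((fun j => V^[j] z) '' ↑(Finset.range d)) = ⊤) :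
    span R ((fun i => F^[i] z) '' ↑(Finset.range c)) ⊔
      span R ((fun j => V^[j] z) '' ↑(Finset.Icc 1 d)) = ⊤ := by
  set L := span R ((fun i => F^[i] z) '' ↑(Finset.range c)) ⊔
      span R ((fun j => V^[j] z) '' ↑(Finset.Icc 1 d))
  have hVM : span R (Set.range V) ≤ L ⊔ maximalIdeal R • ⊤ := by
    refine span_le.2 ?_
    rintro _ ⟨x, rfl⟩
    have hx : x ∈ span R (Set.range F) ⊔ span R ((fun j => V^[j] z) '' ↑(Finset.range d)) :=
      hVspan ▸ mem_top
    have hVx := apply_mem_sup_span V (mapsTo_span_range_maximalIdeal_smul hπ V hVF)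
      (t := (fun j => V^[j] z) '' ↑(Finset.Icc 1 d)) ?_ hx
    · rw [sup_comm]
      exact sup_le_sup_left (le_sup_right : _ ≤ L) _ hVx
    rintro _ ⟨_, ⟨j, hj, rfl⟩, rfl⟩
    simp only [Finset.coe_range, Set.mem_Iio] at hj
    exact ⟨j + 1, by simp; omega, Function.iterate_succ_apply' V j z⟩
  refine top_le_iff.1 (le_of_le_smul_of_le_jacobson_bot Module.Finite.fg_top
    (maximalIdeal_le_jacobson ⊥) ?_)
  calc ⊤ = span R (Set.range V) ⊔ span R ((fun i => F^[i] z) '' ↑(Finset.range c)) :=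
        hFspan.symm
    _ ≤ L ⊔ maximalIdeal R • ⊤ := sup_le hVM (le_sup_of_le_left le_sup_left)

theorem exists_iterate_eq_sum [Module.Finite R M] [Nontrivial M]
    (hπ : maximalIdeal R = Ideal.span {π}) (hπM : IsSMulRegular M π)
    (F : M →ₛₗ[σ] M) (V : M →ₛₗ[τ] M) (hFV : ∀ x, F (V x) = π • x) (hVF : ∀ x, V (F x) = π • x)
    (hFnil : ∃ n : ℕ, ∀ x : M, ∃ y : M, F^[n] x = π • y)
    (hVnil : ∃ n : ℕ, ∀ x : M, ∃ y : M, V^[n] x = π • y)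
    {z : M} (hz : IsGeneratedBy R F V z)
    {c d : ℕ}
    (hd : IsLeastNumGenerators (span R (Set.range F)) d)
    (hc : IsLeastNumGenerators (span R (Set.range V)) c) :
    ∃ A B : ℕ → R,
      F^[c] z = ∑ i ∈ Finset.range c, A i • F^[i] z + ∑ j ∈ Finset.Icc 1 d, B j • V^[j] z ∧
      (∀ i ∈ Finset.range c, A i ∈ maximalIdeal R) ∧
      (∀ j ∈ Finset.Icc 1 (d - 1), B j ∈ maximalIdeal R) ∧ IsUnit (B d) := by
  obtain ⟨hc0, hFc, hFmin⟩ :=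
    iterate_mem_span_range_of_isLeast hπ F V hFV hVF hFnil hVnil hz hc
  obtain ⟨hd0, hVd, hVmin⟩ :=
    iterate_mem_span_range_of_isLeast hπ V F hVF hFV hVnil hFnil hz.swap hd
  have hFN := mapsTo_span_range hπ F hFV hVF
  have hVN := mapsTo_span_range hπ V hVF hFV
  have hspan := sup_span_iterates_eq_top hπ V hVF
    (sup_span_iterate_eq_top hFN hFc (sup_span_range_iterate_eq_top hπ F hFV hVF hz))
    (sup_span_iterate_eq_top hVN hVd (sup_span_range_iterate_eq_top hπ V hVF hFV hz.swap))
  obtain ⟨u, hu, w, hw, huw⟩ := mem_sup.1 (eq_top_iff'.1 hspan (F^[c] z))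
  obtain ⟨A, rfl⟩ := exists_sum_eq_of_mem_span_image hu
  obtain ⟨B, rfl⟩ := exists_sum_eq_of_mem_span_image hw
  have hA : ∀ i ∈ Finset.range c, A i ∈ maximalIdeal R := by
    refine coeff_mem_maximalIdeal_of_sum_mem F (maximalIdeal_smul_top_le_span_range hπ hVF) hFN
      hFc hFmin (fun i => Finset.mem_range.1) ?_
    rw [eq_sub_of_add_eq huw]
    refine sub_mem hFc (sum_mem fun j hj => smul_mem _ _ (iterate_mem_span_range ?_ z))
    simp only [Finset.mem_Icc] at hj
    omega
  refine ⟨A, B, huw.symm, hA, ?_⟩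
  obtain ⟨d, rfl⟩ : ∃ d', d = d' + 1 := ⟨d - 1, by omega⟩
  rw [Finset.sum_Icc_succ_top (by omega)] at huw
  have hB : ∀ j ∈ Finset.Icc 1 d, B j ∈ maximalIdeal R := by
    refine coeff_mem_maximalIdeal_of_sum_mem V (maximalIdeal_smul_top_le_span_range hπ hFV) hVN
      hVd hVmin (fun j hj => by simp only [Finset.mem_Icc] at hj; omega) ?_
    rw [show ∑ j ∈ Finset.Icc 1 d, B j • V^[j] z = F^[c] z - ∑ i ∈ Finset.range c, A i • F^[i] z
      - B (d + 1) • V^[d + 1] z by rw [← huw]; abel]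
    refine sub_mem (sub_mem (iterate_mem_span_range hc0.ne' z) (sum_mem fun i hi => ?_))
      (smul_mem _ _ hVd)
    rcases eq_or_ne i 0 with rfl | hi0
    · exact maximalIdeal_smul_top_le_span_range hπ hFV (smul_mem_smul (hA 0 hi) trivial)
    · exact smul_mem _ _ (iterate_mem_span_range hi0 z)
  refine ⟨hB, by_contra fun hBd => hFmin (c - 1) (by omega) (subset_span ?_)⟩
  refine mem_range_of_apply_mem_maximalIdeal_smul hπ hπM hFV hVF ?_
  rw [← Function.iterate_succ_apply' F, Nat.succ_eq_add_one, Nat.sub_add_cancel hc0, ← huw]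
  refine add_mem (sum_mem fun i hi => smul_mem_smul (hA i hi) trivial)
    (add_mem (sum_mem fun j hj => smul_mem_smul (hB j hj) trivial) (smul_mem_smul ?_ trivial))
  exact (mem_maximalIdeal _).2 hBd

theorem exists_presentation [Module.Finite R M] [Nontrivial M]
    (hπ : maximalIdeal R = Ideal.span {π}) (hπM : IsSMulRegular M π)
    (F : M →ₛₗ[σ] M) (V : M →ₛₗ[τ] M) (hFV : ∀ x, F (V x) = π • x) (hVF : ∀ x, V (F x) = π • x)
    (hFnil : ∃ n : ℕ, ∀ x : M, ∃ y : M, F^[n] x = π • y)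
    (hVnil : ∃ n : ℕ, ∀ x : M, ∃ y : M, V^[n] x = π • y)
    {z : M} (hz : IsGeneratedBy R F V z)
    {c d : ℕ}
    (hd : IsLeastNumGenerators (span R (Set.range F)) d)
    (hc : IsLeastNumGenerators (span R (Set.range V)) c) :
    ∃ a b : ℕ → R, IsUnit (a 0) ∧ IsUnit (b d) ∧ (∀ i ∈ Finset.Icc 1 c, π ∣ a i) ∧
      (∀ i ∈ Finset.Icc 1 (d - 1), π ∣ b i) ∧
      ∑ i ∈ Finset.range (c + 1), a i • F^[c - i] z + ∑ i ∈ Finset.Icc 1 d, b i • V^[i] z = 0 := by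
  obtain ⟨A, B, hAB, hA, hB, hBd⟩ :=
    exists_iterate_eq_sum hπ hπM F V hFV hVF hFnil hVnil hz hd hc
  refine ⟨fun i => if i = 0 then -1 else A (c - i), B, by simp, hBd, fun i hi => ?_,
    fun j hj => Ideal.mem_span_singleton.1 (hπ ▸ hB j hj), ?_⟩
  · simp only [Finset.mem_Icc] at hi
    simp only [if_neg (show i ≠ 0 by omega)]
    exact Ideal.mem_span_singleton.1 (hπ ▸ hA (c - i) (Finset.mem_range.2 (by omega)))
  · have hreflect : ∑ i ∈ Finset.range c, A (c - (i + 1)) • F^[c - (i + 1)] z =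
        ∑ i ∈ Finset.range c, A i • F^[i] z := by
      rw [← Finset.sum_range_reflect (fun i => A i • F^[i] z)]
      simp only [Nat.sub_sub, add_comm 1]
    simp only [Finset.sum_range_succ', Nat.add_one_ne_zero, if_false, if_true, Nat.sub_zero,
      neg_one_smul, hreflect]
    rw [hAB]
    abel

end Dieudonne

end General

variable (p : ℕ) [Fact p.Prime] (k : Type*) [Field k] [IsAlgClosed k] [CharP k p]
variable (M : Type*) [AddCommGroup M] [Module (WittVector p k) M]

/-- Let `M` be a non-zero bi-nilpotent Dieudonné module over `k` generated by
`z ∈ M`, with `d = dim_k (M/FM)` and `c = dim_k (M/VM)`.  Then there exist `a_0, …, a_c` and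
`b_1, …, b_d` in `W(k)` with `a_0, b_d` units, `a_i ∈ pW` for `1 ≤ i ≤ c`, `b_i ∈ pW` for
`1 ≤ i ≤ d-1`, and `Σ_{i=0}^{c} a_i F^{c-i} z + Σ_{i=1}^{d} b_i V^i z = 0`. -/
theorem presentation_of_cyclic_dieudonne_module
    -- `M` is a free `W(k)`-module of finite rank, non-zero
    [Module.Free (WittVector p k) M] [Module.Finite (WittVector p k) M] [Nontrivial M]
    -- `F` is `σ`-semilinear, `V` is `σ⁻¹`-semilinear, and `F ∘ V = V ∘ F = p·id`
    (F V : M → M)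
    (hFadd : ∀ x y, F (x + y) = F x + F y)
    (hVadd : ∀ x y, V (x + y) = V x + V y)
    (hFsmul : ∀ (a : WittVector p k) (x : M), F (a • x) = WittVector.frobeniusEquiv p k a • F x)
    (hVsmul : ∀ (a : WittVector p k) (x : M),
      V (a • x) = (WittVector.frobeniusEquiv p k).symm a • V x)
    (hFV : ∀ x, F (V x) = (p : WittVector p k) • x)
    (hVF : ∀ x, V (F x) = (p : WittVector p k) • x)
    -- `M` is bi-nilpotent: `F` and `V` are nilpotent on `M/pM`
    (hFnil : ∃ n : ℕ, ∀ x : M, ∃ y : M, F^[n] x = (p : WittVector p k) • y)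
    (hVnil : ∃ n : ℕ, ∀ x : M, ∃ y : M, V^[n] x = (p : WittVector p k) • y)
    -- `z` generates `M`: the only `W(k)`-submodule containing `z` stable under `F` and `V` is `M`
    (z : M)
    (hz : ∀ P : Submodule (WittVector p k) M,
      z ∈ P → (∀ x ∈ P, F x ∈ P) → (∀ x ∈ P, V x ∈ P) → P = ⊤)
    -- `d = dim_k (M/FM)`: `d` is the least number of elements generating `M` over `FM`
    (c d : ℕ)
    (hd : IsLeast {n : ℕ | ∃ x : Fin n → M,
      Submodule.span (WittVector p k) (Set.range F) ⊔
        Submodule.span (WittVector p k) (Set.range x) = ⊤} d)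
    -- `c = dim_k (M/VM)`
    (hc : IsLeast {n : ℕ | ∃ x : Fin n → M,
      Submodule.span (WittVector p k) (Set.range V) ⊔
        Submodule.span (WittVector p k) (Set.range x) = ⊤} c) :
    ∃ (a b : ℕ → WittVector p k),
      IsUnit (a 0) ∧ IsUnit (b d) ∧
      (∀ i ∈ Finset.Icc 1 c, ∃ y : WittVector p k, a i = (p : WittVector p k) * y) ∧
      (∀ i ∈ Finset.Icc 1 (d - 1), ∃ y : WittVector p k, b i = (p : WittVector p k) * y) ∧
      (∑ i ∈ Finset.range (c + 1), a i • F^[c - i] z) +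
        (∑ i ∈ Finset.Icc 1 d, b i • V^[i] z) = 0 := by
  have hπ : IsLocalRing.maximalIdeal (WittVector p k) = Ideal.span {(p : WittVector p k)} :=
    (IsDiscreteValuationRing.irreducible_iff_uniformizer _).1 (WittVector.irreducible p)
  exact exists_presentation (σ := (WittVector.frobeniusEquiv p k : WittVector p k →+* _))
    (τ := ((WittVector.frobeniusEquiv p k).symm : WittVector p k →+* _)) hπ
    (IsSMulRegular.of_ne_zero (WittVector.p_nonzero p k))
    { toFun := F, map_add' := hFadd, map_smul' := hFsmul }
    { toFun := V, map_add' := hVadd, map_smul' := hVsmul } hFV hVF hFnil hVnil hz hd hc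

end DieudonneStmt
end
end

section
/- Let N be a non-zero finite-dimensional B(k)-vector space equipped with a σ-semilinear bijection F : N → N which is simple, in the sense that the only B(k)-subspaces of N stable under both F and F⁻¹ are 0 and N, and assume N is isoclinic of slope λ ∈ ℝ. Then any two non-trivial F-valuations of slope λ on N differ by the addition of a real constant: if w₁ and w₂ are non-trivial F-valuations of slope λ on N, then there is α ∈ ℝ with w₂(x) = w₁(x) + α for all x ∈ N. -/
/-!
Write `λ = r / s` in lowest terms. The isoclinic basis gives `x ≠ 0` with `F^(g s) x = p^(g r) x`.
Averaging the iterates of `[ζ] • x` under the `σ^s`-semilinear map `p^(-r) F^s`, where `[ζ]` is the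
Teichmüller lift of a generator of `𝔽_(p^(g s))`, gives a fixed vector unless Artin's independence
of the characters `σ^(j s)` fails; so some `z ≠ 0` satisfies `F^s z = p^r z`. By simplicity
`z, F z, …, F^(s-1) z` span `N`. For an `F`-valuation `w` of slope `λ`, the term `a_i F^i z` has
valuation `v(a_i) + i λ + w(z)`; as `v(a_i) ∈ ℤ` and `gcd(r, s) = 1` these values are pairwise
distinct, so `w(∑ a_i F^i z)` is the least of them and `w(y) - w(z)` does not depend on `w`.
-/

noncomputable section

namespace DieudonneStmt

variable (p : ℕ) [Fact p.Prime] (k : Type*) [Field k] [IsAlgClosed k] [CharP k p]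

/-- The Frobenius automorphism `σ` of `B(k) = FractionRing (WittVector p k)`, extending the
Witt vector Frobenius. -/
def σB : FractionRing (WittVector p k) ≃+* FractionRing (WittVector p k) :=
  WittVector.FractionRing.frobenius p k

/-- `v` is the `p`-adic valuation on `B(k)`, normalized by `v p = 1`: it is multiplicative,
ultrametric, `⊤` exactly at `0`, nonnegative on `W(k)`, integer valued, and `v p = 1`. -/
def IsPadicVal (v : FractionRing (WittVector p k) → WithTop ℝ) : Prop :=
  (∀ x y, v (x * y) = v x + v y) ∧
  (∀ x y, min (v x) (v y) ≤ v (x + y)) ∧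
  (∀ x, v x = ⊤ ↔ x = 0) ∧
  v ((p : ℕ) : FractionRing (WittVector p k)) = (1 : ℝ) ∧
  (∀ w : WittVector p k,
    (0 : WithTop ℝ) ≤ v (algebraMap (WittVector p k) (FractionRing (WittVector p k)) w)) ∧
  (∀ x, x ≠ 0 → ∃ n : ℤ, v x = ((n : ℝ) : WithTop ℝ))

variable (N : Type*) [AddCommGroup N] [Module (FractionRing (WittVector p k)) N]

/-- A valuation on a `B(k)`-vector space `N`. -/
def IsValuation (v : FractionRing (WittVector p k) → WithTop ℝ) (w : N → WithTop ℝ) : Prop :=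
  (∀ (a : FractionRing (WittVector p k)) (x : N), w (a • x) = v a + w x) ∧
  (∀ x y : N, min (w x) (w y) ≤ w (x + y))

/-- An `F`-valuation of slope `lam` on `N`. -/
def IsFValuation (v : FractionRing (WittVector p k) → WithTop ℝ) (F : N → N) (lam : ℝ)
    (w : N → WithTop ℝ) : Prop :=
  IsValuation p k N v w ∧ ∀ x : N, w (F x) = w x + ((lam : ℝ) : WithTop ℝ)

/-- `N` with the `σ`-semilinear bijection `F` is isoclinic of slope `lam`. -/
def IsIsoclinic (F : N → N) (lam : ℝ) : Prop :=
  ∃ (ι : Type) (b : Module.Basis ι (FractionRing (WittVector p k)) N), ∀ i : ι,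
    ∃ (s : ℕ) (r : ℤ), 0 < s ∧
      F^[s] (b i) = (((p : ℕ) : FractionRing (WittVector p k)) ^ r) • b i ∧
      (r : ℝ) = lam * (s : ℝ)

open Function

section Ultrametric

variable {V Γ : Type*} [AddCommGroup V] [LinearOrder Γ] {w : V → Γ}

theorem apply_add_eq_of_lt (hadd : ∀ x y, min (w x) (w y) ≤ w (x + y))
    (hneg : ∀ x, w (-x) = w x) {x y : V} (hxy : w x < w y) : w (x + y) = w x := by
  have hle : w x ≤ w (x + y) := (le_min le_rfl hxy.le).trans (hadd x y)
  have hx : min (w (x + y)) (w y) ≤ w x := by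
    simpa [hneg] using hadd (x + y) (-y)
  rcases min_le_iff.mp hx with h | h
  · exact le_antisymm h hle
  · exact absurd hxy (not_lt.mpr h)

theorem apply_sum_eq_of_lt [OrderTop Γ] (hadd : ∀ x y, min (w x) (w y) ≤ w (x + y))
    (hneg : ∀ x, w (-x) = w x) (h0 : w 0 = ⊤) {ι : Type*} {s : Finset ι} {t : ι → V}
    {i₀ : ι} (hi₀ : i₀ ∈ s) (hfin : w (t i₀) ≠ ⊤)
    (hmin : ∀ j ∈ s, j ≠ i₀ → w (t i₀) < w (t j)) : w (∑ i ∈ s, t i) = w (t i₀) := by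
  classical
  rw [← Finset.add_sum_erase s t hi₀]
  refine apply_add_eq_of_lt hadd hneg ?_
  refine Finset.sum_induction t (fun y => w (t i₀) < w y)
    (fun a b ha hb => (lt_min ha hb).trans_le (hadd a b)) (h0 ▸ hfin.lt_top) ?_
  intro j hj
  exact hmin j (Finset.mem_of_mem_erase hj) (Finset.ne_of_mem_erase hj)

end Ultrametric

theorem iterate_map_smul_of_semilinear {K V : Type*} [SMul K V] {G : V → V} {τ : K → K}
    (hG : ∀ (a : K) (x : V), G (a • x) = τ a • G x) (n : ℕ) (a : K) (x : V) :
    G^[n] (a • x) = τ^[n] a • G^[n] x := by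
  induction n generalizing a x with
  | zero => rfl
  | succ n ih => rw [iterate_succ_apply, iterate_succ_apply, iterate_succ_apply, hG, ih]

theorem isFixedPt_sum_range_iterate {V : Type*} [AddCommMonoid V] [IsRightCancelAdd V]
    (G : V →+ V) {g : ℕ} {y : V} (hy : IsPeriodicPt G g y) :
    IsFixedPt G (∑ j ∈ Finset.range g, G^[j] y) := by
  have h := Finset.sum_range_succ' (fun j => G^[j] y) g
  rw [Finset.sum_range_succ, hy.eq, iterate_zero_apply] at h
  simpa only [IsFixedPt, map_sum, iterate_succ_apply'] using (add_right_cancel h).symm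

theorem exists_ne_zero_isFixedPt_of_isPeriodicPt {K V : Type*} [Field K] [AddCommGroup V]
    [Module K V] (τ : K →+* K) (G : V →+ V) (hG : ∀ (a : K) (x : V), G (a • x) = τ a • G x)
    {g : ℕ} (hg : 0 < g) {x : V} (hx : x ≠ 0) (hxg : IsPeriodicPt G g x)
    {c : K} (hc : minimalPeriod τ c = g) : ∃ z : V, z ≠ 0 ∧ IsFixedPt G z := by
  classical
  have hGit := iterate_map_smul_of_semilinear hG
  have hfix : ∀ n : ℕ, IsFixedPt G (∑ j ∈ Finset.range g, G^[j] (c ^ n • x)) := fun n =>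
    isFixedPt_sum_range_iterate G <| by
      rw [IsPeriodicPt, IsFixedPt, hGit, hxg.eq, ← RingHom.coe_pow, map_pow, RingHom.coe_pow,
        ← hc, iterate_minimalPeriod]
  by_contra! hall
  -- otherwise the characters `τ ^ j` restricted to the powers of `c` would be linearly dependent
  obtain ⟨φ, hφ⟩ := Module.Projective.exists_dual_ne_zero K hx
  let χ : Fin g → (Submonoid.powers c →* K) := fun j =>
    ((τ ^ (j : ℕ) : K →+* K) : K →* K).comp (Submonoid.powers c).subtype
  have hχ : Injective χ := fun i j hij => by
    have hij' := DFunLike.congr_fun hij ⟨c, Submonoid.mem_powers c⟩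
    simp only [χ, MonoidHom.comp_apply, Submonoid.coe_subtype, MonoidHom.coe_coe,
      RingHom.coe_pow] at hij'
    exact Fin.ext (iterate_injOn_Iio_minimalPeriod (hc ▸ i.isLt) (hc ▸ j.isLt) hij')
  have hrel : ∑ j : Fin g, φ (G^[j] x) • ⇑(χ j) = 0 := by
    ext ⟨_, n, rfl⟩
    have hyn := congrArg φ (by_contra fun h => hall _ h (hfix n))
    simpa [χ, hGit, mul_comm, Fin.sum_univ_eq_sum_range fun j => τ^[j] c ^ n * φ (G^[j] x)]
      using hyn
  have hχind := (linearIndependent_monoidHom (Submonoid.powers c) K).comp χ hχ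
  exact hφ (Fintype.linearIndependent_iff.mp hχind _ hrel ⟨0, hg⟩)

theorem exists_ne_zero_iterate_eq_smul {K V : Type*} [Field K] [AddCommGroup V] [Module K V]
    {σ : K →+* K} (F : V →ₛₗ[σ] V) {g s : ℕ} (hg : 0 < g) (hs : 0 < s) {c : K}
    (hc : minimalPeriod σ c = g * s) {π : K} (hπ : π ≠ 0) (hσπ : σ π = π) {x : V} (hx : x ≠ 0)
    (hFx : F^[g * s] x = π ^ g • x) : ∃ z : V, z ≠ 0 ∧ F^[s] z = π • z := by
  have hFit := iterate_map_smul_of_semilinear F.map_smulₛₗ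
  let G : V →+ V := AddMonoidHom.mk' (fun y => π⁻¹ • F^[s] y) fun a b => by
    rw [iterate_map_add, smul_add]
  have hG : ∀ (a : K) (y : V), G (a • y) = (σ ^ s) a • G y := fun a y => by
    simp only [G, AddMonoidHom.mk'_apply, hFit, RingHom.coe_pow, smul_comm π⁻¹]
  have hGit : ∀ j y, G^[j] y = π⁻¹ ^ j • F^[s * j] y := by
    intro j y
    induction j with
    | zero => simp
    | succ j ih =>
      have hfix : σ^[s] (π⁻¹ ^ j) = π⁻¹ ^ j := iterate_fixed (by rw [map_pow, map_inv₀, hσπ]) s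
      rw [iterate_succ_apply', ih, AddMonoidHom.mk'_apply, hFit, hfix, smul_smul, ← pow_succ',
        ← iterate_add_apply, Nat.mul_succ, add_comm s]
  have hper : IsPeriodicPt G g x := by
    rw [IsPeriodicPt, IsFixedPt, hGit, mul_comm, hFx, smul_smul, ← mul_pow, inv_mul_cancel₀ hπ,
      one_pow, one_smul]
  have hτc : minimalPeriod ⇑(σ ^ s) c = g := by
    rw [RingHom.coe_pow, minimalPeriod_iterate_eq_div_gcd hs.ne', hc, Nat.gcd_mul_left_left,
      Nat.mul_div_cancel _ hs]
  obtain ⟨z, hz, hGz⟩ := exists_ne_zero_isFixedPt_of_isPeriodicPt (σ ^ s) G hG hg hx hper hτc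
  exact ⟨z, hz, ((eq_inv_smul_iff₀ hπ).mp hGz.symm).symm⟩

theorem span_iterate_eq_top_of_simple {K V : Type*} [Field K] [AddCommGroup V] [Module K V]
    {σ : K →+* K} [RingHomSurjective σ] (F : V →ₛₗ[σ] V) (hF : Injective F)
    (hsimple : ∀ P : Submodule K V,
      (∀ x ∈ P, F x ∈ P) → (∀ x : V, F x ∈ P → x ∈ P) → P = ⊥ ∨ P = ⊤)
    {s : ℕ} (hs : 0 < s) {π : K} (hπ : π ≠ 0) {z : V} (hz : z ≠ 0) (hFz : F^[s] z = π • z) :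
    Submodule.span K (Set.range fun i : Fin s => F^[i] z) = ⊤ := by
  set P := Submodule.span K (Set.range fun i : Fin s => F^[i] z)
  have hmem : ∀ i < s, F^[i] z ∈ P := fun i hi => Submodule.subset_span ⟨⟨i, hi⟩, rfl⟩
  have hFmem : ∀ i < s, F (F^[i] z) ∈ P := by
    intro i hi
    rw [← iterate_succ_apply' F]
    rcases (Nat.succ_le_of_lt hi).lt_or_eq with h | h
    · exact hmem _ h
    · rw [h, hFz]
      exact P.smul_mem π (hmem 0 hs)
  have hPF : P ≤ P.comap F := Submodule.span_le.mpr <| by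
    rintro _ ⟨i, rfl⟩
    exact hFmem i i.isLt
  have hFP : P ≤ P.map F := Submodule.span_le.mpr <| by
    rintro _ ⟨⟨i, hi⟩, rfl⟩
    cases i with
    | zero =>
      have hπz : π • z ∈ P.map F := by
        rw [← hFz, show s = s - 1 + 1 by omega, iterate_succ_apply']
        exact Submodule.mem_map_of_mem (hmem _ (by omega))
      simpa [hπ] using (P.map F).smul_mem π⁻¹ hπz
    | succ i =>
      change F^[i + 1] z ∈ P.map F
      rw [iterate_succ_apply']
      exact Submodule.mem_map_of_mem (hmem i (by omega))
  refine (hsimple P (fun x hx => hPF hx) fun x hx => ?_).resolve_left fun hbot => hz ?_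
  · obtain ⟨y, hy, hFy⟩ := Submodule.mem_map.mp (hFP hx)
    exact hF hFy ▸ hy
  · simpa [hbot] using hmem 0 hs

theorem _root_.Function.minimalPeriod_eq_of_injOn {α : Type*} {f : α → α} {x : α} {n : ℕ}
    (hn : 0 < n) (hper : IsPeriodicPt f n x) (hinj : Set.InjOn (f^[·] x) (Set.Iio n)) :
    minimalPeriod f x = n := by
  have hpos := hper.minimalPeriod_pos hn
  refine (hper.minimalPeriod_le hn).antisymm (not_lt.mp fun hlt => hpos.ne' ?_)
  exact hinj hlt hn (iterate_minimalPeriod (f := f) (x := x))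

theorem _root_.IsPrimitiveRoot.pow_pow_eq_self {M : Type*} [CommMonoid M] {ζ : M} {q n : ℕ}
    (hq : 0 < q) (hζ : IsPrimitiveRoot ζ (q ^ n - 1)) : ζ ^ q ^ n = ζ := by
  conv_rhs => rw [← one_mul ζ, ← hζ.pow_eq_one]
  rw [← pow_succ, Nat.sub_add_cancel (Nat.one_le_pow _ _ hq)]

theorem _root_.IsPrimitiveRoot.pow_pow_injOn {M : Type*} [CommMonoid M] {ζ : M} {q n : ℕ}
    (hq : 2 ≤ q) (hζ : IsPrimitiveRoot ζ (q ^ n - 1)) :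
    Set.InjOn (fun a => ζ ^ q ^ a) (Set.Iio n) := by
  -- `q ^ n - 1` divides `q ^ b - q ^ a`, which is smaller than it
  suffices key : ∀ a b, a ≤ b → b < n → ζ ^ q ^ a = ζ ^ q ^ b → a = b by
    intro a ha b hb hab
    rcases le_total a b with h | h
    exacts [key a b h hb hab, (key b a h ha hab.symm).symm]
  intro a b hab hb h
  have hmono : q ^ a ≤ q ^ b := Nat.pow_le_pow_right (by omega) hab
  have hqb := Nat.pow_lt_pow_right (by omega : 1 < q) hb
  have hqa := Nat.one_le_pow a q (by omega)
  have hdvd : q ^ n - 1 ∣ q ^ b - q ^ a := by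
    rw [hζ.eq_orderOf]
    exact (Nat.modEq_iff_dvd' hmono).mp (((hζ.isOfFinOrder (by omega)).pow_eq_pow_iff_modEq).mp h)
  have hlt : q ^ b - q ^ a < q ^ n - 1 := by omega
  have := Nat.eq_zero_of_dvd_of_lt hdvd hlt
  exact Nat.pow_right_injective hq (by omega : q ^ a = q ^ b)

theorem exists_coprime_factorization (r : ℤ) {s : ℕ} (hs : 0 < s) :
    ∃ g s₀ : ℕ, ∃ r₀ : ℤ, 0 < g ∧ 0 < s₀ ∧ r₀.gcd s₀ = 1 ∧ s = g * s₀ ∧ r = g * r₀ := by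
  obtain ⟨g, r₀, s₀, hg, hcop, hr, hs'⟩ :=
    Int.exists_gcd_one' (Int.gcd_pos_of_ne_zero_right r (by omega : (s : ℤ) ≠ 0))
  have hs₀ : 0 < s₀ := by
    by_contra h
    nlinarith
  lift s₀ to ℕ using hs₀.le
  exact ⟨g, s₀, r₀, hg, by omega, hcop, by zify; linarith, by linarith⟩

theorem eq_of_intCast_add_mul_eq {s : ℕ} {r : ℤ} {lam : ℝ} (hcop : r.gcd s = 1)
    (hlam : (r : ℝ) = lam * s) {i j : ℕ} (hi : i < s) (hj : j < s) {m n : ℤ}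
    (h : m + i * lam = n + j * lam) : i = j := by
  have hint : m * s + i * r = n * s + j * r := by
    have : ((m * s + i * r : ℤ) : ℝ) = ((n * s + j * r : ℤ) : ℝ) := by
      push_cast
      rw [hlam]
      linear_combination (s : ℝ) * h
    exact_mod_cast this
  have hdvd : (s : ℤ) ∣ (i - j : ℤ) * r := ⟨n - m, by linear_combination hint⟩
  have := Int.eq_zero_of_abs_lt_dvd
    (Int.dvd_of_dvd_mul_left_of_gcd_one hdvd (by rwa [Int.gcd_comm])) (by rw [abs_lt]; omega)
  omega

local notation "𝔹" => FractionRing (WittVector p k)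

theorem σB_teichmuller (u : k) :
    σB p k (algebraMap (WittVector p k) 𝔹 (WittVector.teichmuller p u)) =
      algebraMap (WittVector p k) 𝔹 (WittVector.teichmuller p (u ^ p)) := by
  rw [σB, WittVector.FractionRing.frobenius, IsFractionRing.ringEquivOfRingEquiv_algebraMap,
    WittVector.frobeniusEquiv_apply, WittVector.frobenius_eq_map_frobenius,
    WittVector.map_teichmuller, frobenius_def]

theorem iterate_σB_teichmuller (n : ℕ) (u : k) :
    (σB p k)^[n] (algebraMap (WittVector p k) 𝔹 (WittVector.teichmuller p u)) =
      algebraMap (WittVector p k) 𝔹 (WittVector.teichmuller p (u ^ p ^ n)) := by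
  induction n generalizing u with
  | zero => simp
  | succ n ih => rw [iterate_succ_apply, σB_teichmuller, ih, ← pow_mul, pow_succ']

theorem exists_minimalPeriod_σB_eq {n : ℕ} (hn : 0 < n) :
    ∃ c : 𝔹, minimalPeriod (σB p k) c = n := by
  have : NeZero ((p ^ n - 1 : ℕ) : k) := ⟨by
    rw [Nat.cast_sub (Nat.one_le_pow _ _ (Fact.out : p.Prime).pos), Nat.cast_pow,
      CharP.cast_eq_zero, zero_pow hn.ne', zero_sub, Nat.cast_one]
    exact neg_ne_zero.mpr one_ne_zero⟩
  obtain ⟨ζ, hζ⟩ := HasEnoughRootsOfUnity.exists_primitiveRoot k (p ^ n - 1)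
  have hp := (Fact.out : p.Prime).two_le
  have hteich : Injective fun u : k => algebraMap (WittVector p k) 𝔹 (WittVector.teichmuller p u) :=
    fun u v h => by
      simpa using congrArg (WittVector.coeff · 0) (IsFractionRing.injective (WittVector p k) 𝔹 h)
  refine ⟨algebraMap (WittVector p k) 𝔹 (WittVector.teichmuller p ζ),
    minimalPeriod_eq_of_injOn hn ?_ ?_⟩
  · rw [IsPeriodicPt, IsFixedPt, iterate_σB_teichmuller, hζ.pow_pow_eq_self (by omega)]
  · intro a ha b hb hab
    simp only [iterate_σB_teichmuller] at hab
    exact hζ.pow_pow_injOn hp ha hb (hteich hab)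

section Isoclinic

variable {p k N}

theorem IsIsoclinic.exists_iterate_eq_zpow_smul [Nontrivial N] {lam : ℝ}
    (F : N →ₛₗ[(σB p k : 𝔹 →+* 𝔹)] N) (hiso : IsIsoclinic p k N F lam) :
    ∃ (s : ℕ) (r : ℤ) (z : N), 0 < s ∧ r.gcd s = 1 ∧ (r : ℝ) = lam * s ∧ z ≠ 0 ∧
      F^[s] z = (p : 𝔹) ^ r • z := by
  obtain ⟨ι, b, hb⟩ := hiso
  obtain ⟨i⟩ := b.index_nonempty
  obtain ⟨s, r, hs, hFs, hrs⟩ := hb i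
  obtain ⟨g, s₀, r₀, hg, hs₀, hcop, rfl, rfl⟩ := exists_coprime_factorization r hs
  obtain ⟨c, hc⟩ := exists_minimalPeriod_σB_eq p k (Nat.mul_pos hg hs₀)
  have hp := WittVector.FractionRing.p_nonzero p k
  obtain ⟨z, hz, hFz⟩ := exists_ne_zero_iterate_eq_smul F hg hs₀ hc (zpow_ne_zero r₀ hp)
    (by rw [map_zpow₀, map_natCast]) (b.ne_zero i)
    (by rw [hFs, ← zpow_natCast, ← zpow_mul, mul_comm])
  refine ⟨s₀, r₀, z, hs₀, hcop, ?_, hz, hFz⟩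
  have hg' : (g : ℝ) ≠ 0 := by positivity
  push_cast at hrs
  exact mul_left_cancel₀ hg' (by linear_combination hrs)

end Isoclinic

section Valuations

omit [IsAlgClosed k] [CharP k p]

variable {p k}
variable {v : FractionRing (WittVector p k) → WithTop ℝ}

theorem IsPadicVal.map_zero (hv : IsPadicVal p k v) : v 0 = ⊤ := (hv.2.2.1 0).mpr rfl

theorem IsPadicVal.map_neg_one (hv : IsPadicVal p k v) : v (-1) = 0 := by
  obtain ⟨hmul, -, -, -, -, hint⟩ := hv
  obtain ⟨n, hn⟩ := hint (-1) (neg_ne_zero.mpr one_ne_zero)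
  have h₁ := hmul (-1) (-1)
  have h₂ := hmul 1 1
  rw [neg_mul_neg, mul_one, hn] at h₁
  rw [mul_one, h₁] at h₂
  rw [hn]
  norm_cast at h₂ ⊢
  omega

theorem IsPadicVal.exists_strict_argmin (hv : IsPadicVal p k v) {s : ℕ} {r : ℤ} {lam : ℝ}
    (hcop : r.gcd s = 1) (hlam : (r : ℝ) = lam * s) {a : Fin s → 𝔹} (ha : a ≠ 0) :
    ∃ i₀, a i₀ ≠ 0 ∧ ∀ j ≠ i₀,
      v (a i₀) + (((i₀ : ℕ) * lam : ℝ) : WithTop ℝ) <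
        v (a j) + (((j : ℕ) * lam : ℝ) : WithTop ℝ) := by
  set e := fun i : Fin s => v (a i) + (((i : ℕ) * lam : ℝ) : WithTop ℝ)
  have he : ∀ i, a i ≠ 0 → ∃ n : ℤ, e i = ((n + (i : ℕ) * lam : ℝ) : WithTop ℝ) := fun i hi => by
    obtain ⟨n, hn⟩ := hv.2.2.2.2.2 (a i) hi
    exact ⟨n, by rw [WithTop.coe_add, ← hn]⟩
  have he_top : ∀ i, a i = 0 → e i = ⊤ := fun i hi => by simp only [e, hi, hv.map_zero, top_add]
  obtain ⟨j₀, hj₀⟩ := Function.ne_iff.mp ha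
  obtain ⟨i₀, -, hmin⟩ := Finset.exists_min_image Finset.univ e ⟨j₀, Finset.mem_univ _⟩
  have hi₀ : a i₀ ≠ 0 := fun h => by
    obtain ⟨n, hn⟩ := he j₀ hj₀
    have := hmin j₀ (Finset.mem_univ _)
    rw [he_top i₀ h, hn] at this
    exact WithTop.not_top_le_coe _ this
  refine ⟨i₀, hi₀, fun j hj => (hmin j (Finset.mem_univ _)).lt_of_ne fun heq => hj ?_⟩
  obtain ⟨n, hn⟩ := he i₀ hi₀
  by_cases haj : a j = 0
  · rw [hn, he_top j haj] at heq
    exact absurd heq WithTop.coe_ne_top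
  obtain ⟨m, hm⟩ := he j haj
  rw [hn, hm, WithTop.coe_inj] at heq
  exact Fin.ext (eq_of_intCast_add_mul_eq hcop hlam j.isLt i₀.isLt heq.symm)

variable {N} {w : N → WithTop ℝ}

theorem IsValuation.map_zero (hv : IsPadicVal p k v) (hw : IsValuation p k N v w) : w 0 = ⊤ := by
  simpa [hv.map_zero] using hw.1 0 0

theorem IsValuation.map_neg (hv : IsPadicVal p k v) (hw : IsValuation p k N v w) (x : N) :
    w (-x) = w x := by
  rw [← neg_one_smul 𝔹 x, hw.1, hv.map_neg_one, zero_add]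

variable {F : N → N} {lam : ℝ}

theorem IsFValuation.map_iterate (hw : IsFValuation p k N v F lam w) (n : ℕ) (x : N) :
    w (F^[n] x) = w x + ((n * lam : ℝ) : WithTop ℝ) := by
  induction n with
  | zero => simp
  | succ n ih =>
    rw [iterate_succ_apply', hw.2, ih, add_assoc, ← WithTop.coe_add]
    congr 2
    push_cast
    ring

theorem IsFValuation.eq_top_iff_of_simple (hv : IsPadicVal p k v)
    (hw : IsFValuation p k N v F lam w)
    (hsimple : ∀ P : Submodule 𝔹 N, (∀ x ∈ P, F x ∈ P) → (∀ x : N, F x ∈ P → x ∈ P) → P = ⊥ ∨ P = ⊤)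
    (hnt : ∃ x : N, w x ≠ ⊤) (x : N) : w x = ⊤ ↔ x = 0 := by
  let P : Submodule 𝔹 N :=
    { carrier := {x | w x = ⊤}
      add_mem' := fun {a b} (ha : w a = ⊤) (hb : w b = ⊤) => top_le_iff.mp <| by
        simpa [ha, hb] using hw.1.2 a b
      zero_mem' := hw.1.map_zero hv
      smul_mem' := fun c x (hx : w x = ⊤) => show w (c • x) = ⊤ by rw [hw.1.1, hx, add_top] }
  have hP : ∀ x, x ∈ P ↔ w x = ⊤ := fun _ => Iff.rfl
  rcases hsimple P (fun x hx => by simp [hP, hw.2, (hP x).mp hx])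
      (fun x hx => by simpa [hP, hw.2] using hx) with hbot | htop
  · rw [← hP, hbot, Submodule.mem_bot]
  · obtain ⟨y, hy⟩ := hnt
    exact absurd ((hP y).mp (htop ▸ Submodule.mem_top)) hy

theorem IsFValuation.apply_sum_smul_iterate_eq (hv : IsPadicVal p k v)
    (hw : IsFValuation p k N v F lam w) {z : N} (hz : w z ≠ ⊤) {s : ℕ} {a : Fin s → 𝔹}
    {i₀ : Fin s} (hai₀ : a i₀ ≠ 0)
    (hmin : ∀ j ≠ i₀, v (a i₀) + (((i₀ : ℕ) * lam : ℝ) : WithTop ℝ) <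
      v (a j) + (((j : ℕ) * lam : ℝ) : WithTop ℝ)) :
    w (∑ i, a i • F^[i] z) = v (a i₀) + (((i₀ : ℕ) * lam : ℝ) : WithTop ℝ) + w z := by
  have hterm : ∀ i : Fin s,
      w (a i • F^[i] z) = v (a i) + (((i : ℕ) * lam : ℝ) : WithTop ℝ) + w z := fun i => by
    rw [hw.1.1, hw.map_iterate, add_comm (w z), add_assoc]
  rw [apply_sum_eq_of_lt hw.1.2 (hw.1.map_neg hv) (hw.1.map_zero hv) (Finset.mem_univ i₀), hterm]
  · rw [hterm]
    exact WithTop.add_ne_top.mpr ⟨WithTop.add_ne_top.mpr ⟨mt (hv.2.2.1 _).mp hai₀,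
      WithTop.coe_ne_top⟩, hz⟩
  · intro j _ hj
    simpa only [hterm] using WithTop.add_lt_add_right hz (hmin j hj)

end Valuations

theorem FValuations_differ_by_constant_of_simple
    (v : FractionRing (WittVector p k) → WithTop ℝ) (hv : IsPadicVal p k v)
    (F : N → N)
    (hFadd : ∀ x y, F (x + y) = F x + F y)
    (hFsmul : ∀ (a : FractionRing (WittVector p k)) (x : N), F (a • x) = σB p k a • F x)
    (hFbij : Function.Bijective F)
    -- `N` is simple: the only subspaces stable under `F` and `F⁻¹` are `0` and `N`
    (hsimple : ∀ P : Submodule (FractionRing (WittVector p k)) N,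
      (∀ x ∈ P, F x ∈ P) → (∀ x : N, F x ∈ P → x ∈ P) → P = ⊥ ∨ P = ⊤)
    (lam : ℝ)
    (hiso : IsIsoclinic p k N F lam)
    (w₁ w₂ : N → WithTop ℝ)
    (h₁ : IsFValuation p k N v F lam w₁) (h₂ : IsFValuation p k N v F lam w₂)
    (hnt₁ : ∃ x : N, w₁ x ≠ ⊤) (hnt₂ : ∃ x : N, w₂ x ≠ ⊤) :
    ∃ α : ℝ, ∀ x : N, w₂ x = w₁ x + ((α : ℝ) : WithTop ℝ) := by
  let Fₛ : N →ₛₗ[(σB p k : 𝔹 →+* 𝔹)] N := ⟨⟨F, hFadd⟩, hFsmul⟩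
  have htop₁ := h₁.eq_top_iff_of_simple hv hsimple hnt₁
  have htop₂ := h₂.eq_top_iff_of_simple hv hsimple hnt₂
  obtain ⟨x₁, hx₁⟩ := hnt₁
  have : Nontrivial N := nontrivial_of_ne x₁ 0 (mt (htop₁ x₁).mpr hx₁)
  obtain ⟨s, r, z, hs, hcop, hlam, hz, hFz⟩ := hiso.exists_iterate_eq_zpow_smul Fₛ
  have hspan : Submodule.span 𝔹 (Set.range fun i : Fin s => F^[i] z) = ⊤ :=
    span_iterate_eq_top_of_simple Fₛ hFbij.injective hsimple hs
    (zpow_ne_zero r (WittVector.FractionRing.p_nonzero p k)) hz hFz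
  obtain ⟨W₁, hW₁⟩ := WithTop.ne_top_iff_exists.mp (mt (htop₁ z).mp hz)
  obtain ⟨W₂, hW₂⟩ := WithTop.ne_top_iff_exists.mp (mt (htop₂ z).mp hz)
  refine ⟨W₂ - W₁, fun y => ?_⟩
  rcases eq_or_ne y 0 with rfl | hy
  · rw [h₁.1.map_zero hv, h₂.1.map_zero hv, top_add]
  obtain ⟨a, rfl⟩ :=
    (Submodule.mem_span_range_iff_exists_fun 𝔹).mp (Submodule.eq_top_iff'.mp hspan y)
  obtain ⟨i₀, hai₀, hmin⟩ := hv.exists_strict_argmin hcop hlam (a := a) (by rintro rfl; simp at hy)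
  rw [h₁.apply_sum_smul_iterate_eq hv (hW₁ ▸ WithTop.coe_ne_top) hai₀ hmin,
    h₂.apply_sum_smul_iterate_eq hv (hW₂ ▸ WithTop.coe_ne_top) hai₀ hmin, ← hW₁, ← hW₂,
    add_assoc _ (W₁ : WithTop ℝ), ← WithTop.coe_add, add_sub_cancel]

end DieudonneStmt
end
end

section
/- Let M be a non-zero free W-module of finite rank with an injective σ-semilinear map F : M → M, and set N = M ⊗_W B(k). Fix q ∈ ℕ, let α_q be the maximal integer with F^qM ⊆ p^{α_q}M, and let β_q be the minimal integer with p^{β_q}M ⊆ F^qM (both exist, and β_q ≥ α_q). Then δ_q = β_q − α_q is the minimal non-negative integer δ with the following property: for every W-linear endomorphism φ of M, the induced B(k)-linear endomorphism of N maps F^qM into p^{−δ}·F^qM (equivalently, p^δ·φ maps F^qM into F^qM). -/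
/-!
Since `σ` is bijective, `F^q` maps a basis of `M` to a linearly independent family, so by
Cramer's rule `F^qM` contains `det · M` with `det ≠ 0`; as `W` is a DVR this gives `p^β M ⊆ F^qM`.
Krull's intersection theorem makes `α` finite, and maximality of `α` yields `y ∉ pM` with
`p^α y ∈ F^qM`, hence a functional `f` with `f y = 1`. Now `p^(β-α) φ(F^qM) ⊆ p^β M ⊆ F^qM`;
conversely, if `p^δ φ` preserves `F^qM` for all `φ`, then applying it to `φ = f(·) x` and `p^α y`
gives `p^(δ+α) M ⊆ F^qM`, so `β ≤ δ + α`.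
-/

open Module

theorem iterate_map_smul_of_map_smul {R M : Type*} [SMul R M] {F : M → M} {σ : R → R}
    (h : ∀ a x, F (a • x) = σ a • F x) (n : ℕ) (a : R) (x : M) :
    F^[n] (a • x) = σ^[n] a • F^[n] x := by
  induction n generalizing a x with
  | zero => rfl
  | succ n ih => simp only [Function.iterate_succ_apply, h, ih]

namespace Module.Basis

variable {ι R M : Type*} [Fintype ι] [DecidableEq ι] [CommRing R] [AddCommGroup M] [Module R M]

theorem det_smul_mem_span_range (b : Basis ι R M) (v : ι → M) (x : M) :
    b.det v • x ∈ Submodule.span R (Set.range v) := by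
  have hcramer : ∑ j, (b.toMatrix v).cramer (b.repr x) j • v j = b.det v • x := by
    apply b.equivFun.injective
    rw [b.det_apply, map_smul, ← Matrix.mulVec_cramer]
    ext i
    simp [Matrix.mulVec, dotProduct, Basis.toMatrix_apply, mul_comm]
  rw [← hcramer]
  exact Submodule.sum_mem _ fun j _ => Submodule.smul_mem _ _ (Submodule.subset_span ⟨j, rfl⟩)

theorem det_ne_zero_of_linearIndependent [IsDomain R] (b : Basis ι R M) {v : ι → M}
    (hv : LinearIndependent R v) : b.det v ≠ 0 := by
  rw [b.det_apply, ← Matrix.nonsingular_iff_det_ne_zero]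
  exact .of_linearIndependent_col (hv.map' b.equivFun.toLinearMap b.equivFun.ker)

end Module.Basis

section CommRing

variable {R M : Type*} [CommRing R] [AddCommGroup M] [Module R M] {ϖ : R} (S : Submodule R M)

namespace Submodule

theorem pow_sub_smul_map_mem {α β : ℕ} (hα : ∀ x ∈ S, ∃ y, x = ϖ ^ α • y)
    (hβ : ∀ x, ϖ ^ β • x ∈ S) (hαβ : α ≤ β) (φ : M →ₗ[R] M) {x : M} (hx : x ∈ S) :
    ϖ ^ (β - α) • φ x ∈ S := by
  obtain ⟨y, rfl⟩ := hα x hx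
  rw [map_smul, smul_smul, ← pow_add, Nat.sub_add_cancel hαβ]
  exact hβ _

theorem pow_add_smul_mem {α δ : ℕ} {y : M} (hy : ϖ ^ α • y ∈ S) {f : Dual R M} (hfy : f y = 1)
    (hδ : ∀ φ : M →ₗ[R] M, ∀ x ∈ S, ϖ ^ δ • φ x ∈ S) (x : M) : ϖ ^ (δ + α) • x ∈ S := by
  simpa [hfy, smul_smul, pow_add] using hδ (f.smulRight x) _ hy

theorem isLeast_setOf_pow_smul_map_mem {α β : ℕ} (hα : ∀ x ∈ S, ∃ y, x = ϖ ^ α • y) {y : M}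
    (hy : ϖ ^ α • y ∈ S) {f : Dual R M} (hfy : f y = 1) (hβ : IsLeast {b | ∀ x, ϖ ^ b • x ∈ S} β)
    (hαβ : α ≤ β) :
    IsLeast {δ | ∀ φ : M →ₗ[R] M, ∀ x ∈ S, ϖ ^ δ • φ x ∈ S} (β - α) := by
  refine ⟨S.pow_sub_smul_map_mem hα hβ.1 hαβ, fun δ hδ => ?_⟩
  have := hβ.2 (S.pow_add_smul_mem hy hfy hδ)
  omega

theorem le_of_pow_smul_mem [IsDomain R] (hϖ0 : ϖ ≠ 0) (hϖu : ¬IsUnit ϖ) {α β : ℕ}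
    (hα : ∀ x ∈ S, ∃ y, x = ϖ ^ α • y) (hβ : ∀ x, ϖ ^ β • x ∈ S) {y : M} {f : Dual R M}
    (hfy : f y = 1) : α ≤ β := by
  obtain ⟨z, hz⟩ := hα _ (hβ y)
  have hdvd : ϖ ^ β = ϖ ^ α * f z := by simpa [hfy] using congrArg f hz
  exact (pow_dvd_pow_iff hϖ0 hϖu).mp ⟨_, hdvd⟩

end Submodule

end CommRing

section LocalRing

variable {R M : Type*} [CommRing R] [AddCommGroup M] [Module R M] {ϖ : R}

theorem eq_zero_of_forall_exists_eq_pow_smul [IsNoetherianRing R] [IsLocalRing R]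
    [Module.Finite R M] (hϖ : ¬IsUnit ϖ) {x : M} (hx : ∀ a : ℕ, ∃ y, x = ϖ ^ a • y) : x = 0 := by
  have hI : Ideal.span {ϖ} ≠ ⊤ := by rwa [Ne, Ideal.span_singleton_eq_top]
  rw [← Submodule.mem_bot R, ← Ideal.iInf_pow_smul_eq_bot_of_isLocalRing _ hI, Submodule.mem_iInf]
  intro a
  obtain ⟨y, rfl⟩ := hx a
  rw [Ideal.span_singleton_pow, Submodule.ideal_span_singleton_smul]
  exact Submodule.smul_mem_pointwise_smul _ _ _ Submodule.mem_top

theorem Submodule.exists_isGreatest_of_ne_bot [IsNoetherianRing R] [IsLocalRing R]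
    [Module.Finite R M] (hϖ : ¬IsUnit ϖ) {S : Submodule R M} (hS : S ≠ ⊥) :
    ∃ α, IsGreatest {a | ∀ x ∈ S, ∃ y, x = ϖ ^ a • y} α := by
  obtain ⟨s, hsS, hs0⟩ := S.ne_bot_iff.mp hS
  obtain ⟨a₀, ha₀⟩ : ∃ a₀, ¬∃ y, s = ϖ ^ a₀ • y := by
    by_contra! h
    exact hs0 (eq_zero_of_forall_exists_eq_pow_smul hϖ h)
  refine BddAbove.exists_isGreatest_of_nonempty ⟨a₀, fun a ha => ?_⟩ ⟨0, fun x _ => ⟨x, by simp⟩⟩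
  by_contra! hlt
  obtain ⟨y, rfl⟩ := ha s hsS
  exact ha₀ ⟨ϖ ^ (a - a₀) • y, by rw [smul_smul, ← pow_add, Nat.add_sub_cancel' hlt.le]⟩

end LocalRing

section DiscreteValuationRing

variable {R M : Type*} [CommRing R] [IsDomain R] [IsDiscreteValuationRing R]
  [AddCommGroup M] [Module R M] {ϖ : R}

theorem exists_pow_smul_mem_of_smul_mem (hϖ : Irreducible ϖ) {S : Submodule R M} {c : R}
    (hc0 : c ≠ 0) (hc : ∀ x, c • x ∈ S) : ∃ n, ∀ x, ϖ ^ n • x ∈ S := by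
  obtain ⟨n, u, rfl⟩ := IsDiscreteValuationRing.eq_unit_mul_pow_irreducible hc0 hϖ
  refine ⟨n, fun x => ?_⟩
  simpa [smul_smul, ← mul_assoc] using S.smul_mem (↑u⁻¹ : R) (hc x)

theorem exists_dual_apply_eq_one [Module.Free R M] [Module.Finite R M] (hϖ : Irreducible ϖ)
    {y : M} (hy : ∀ z, y ≠ ϖ • z) : ∃ f : Dual R M, f y = 1 := by
  let b := Free.chooseBasis R M
  by_contra! hf
  have hdvd : ∀ j, ϖ ∣ b.repr y j := by
    intro j
    have hunit : ¬IsUnit (b.repr y j) := fun hu =>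
      hf (hu.unit⁻¹.val • b.coord j) (by simp [Basis.coord_apply])
    rw [← Ideal.mem_span_singleton, ← (IsDiscreteValuationRing.irreducible_iff_uniformizer ϖ).mp hϖ]
    exact (IsLocalRing.mem_maximalIdeal _).mpr hunit
  choose z hz using hdvd
  refine hy (∑ j, z j • b j) ?_
  conv_lhs => rw [← b.sum_repr y]
  simp only [Finset.smul_sum, smul_smul, ← hz]

theorem Submodule.exists_pow_smul_mem_dual_apply_eq_one [Module.Free R M] [Module.Finite R M]
    (hϖ : Irreducible ϖ) {S : Submodule R M} {α : ℕ}
    (hα : IsGreatest {a | ∀ x ∈ S, ∃ y, x = ϖ ^ a • y} α) :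
    ∃ y, ϖ ^ α • y ∈ S ∧ ∃ f : Dual R M, f y = 1 := by
  obtain ⟨s, hsS, hs⟩ : ∃ s ∈ S, ∀ z, s ≠ ϖ ^ (α + 1) • z := by
    by_contra! h
    exact absurd (hα.2 h) (by omega)
  obtain ⟨y, rfl⟩ := hα.1 s hsS
  refine ⟨y, hsS, exists_dual_apply_eq_one hϖ fun z hyz => hs z ?_⟩
  rw [hyz, smul_smul, ← pow_succ]

end DiscreteValuationRing

theorem Submodule.exists_isGreatest_isLeast_isLeast_sub {R M : Type*} [CommRing R] [IsDomain R]
    [IsDiscreteValuationRing R] [AddCommGroup M] [Module R M] [Module.Free R M]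
    [Module.Finite R M] [Nontrivial M] {ϖ : R} (hϖ : Irreducible ϖ) (S : Submodule R M) {c : R}
    (hc0 : c ≠ 0) (hc : ∀ x, c • x ∈ S) :
    ∃ α β : ℕ,
      IsGreatest {a | ∀ x ∈ S, ∃ y, x = ϖ ^ a • y} α ∧
      IsLeast {b | ∀ x, ϖ ^ b • x ∈ S} β ∧
      α ≤ β ∧
      IsLeast {δ | ∀ φ : M →ₗ[R] M, ∀ x ∈ S, ϖ ^ δ • φ x ∈ S} (β - α) := by
  classical
  have hS : S ≠ ⊥ := by
    obtain ⟨x, hx⟩ := exists_ne (0 : M)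
    exact S.ne_bot_iff.mpr ⟨c • x, hc x, smul_ne_zero hc0 hx⟩
  obtain ⟨α, hα⟩ := S.exists_isGreatest_of_ne_bot hϖ.not_isUnit hS
  obtain ⟨y, hyS, f, hfy⟩ := S.exists_pow_smul_mem_dual_apply_eq_one hϖ hα
  have hβ := Nat.isLeast_find (exists_pow_smul_mem_of_smul_mem hϖ hc0 hc)
  have hαβ := S.le_of_pow_smul_mem hϖ.ne_zero hϖ.not_isUnit hα.1 hβ.1 hfy
  exact ⟨α, _, hα, hβ, hαβ, S.isLeast_setOf_pow_smul_map_mem hα.1 hyS hfy hβ hαβ⟩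

noncomputable section

namespace DieudonneStmt

variable (p : ℕ) [Fact p.Prime] (k : Type*) [Field k] [IsAlgClosed k] [CharP k p]
variable (M : Type*) [AddCommGroup M] [Module (WittVector p k) M]

/-- for a non-zero free `W(k)`-module `M` of finite rank with an injective
`σ`-semilinear `F : M → M` and `q ∈ ℕ`, the maximal `α` with `F^qM ⊆ p^αM` and the minimal
`β` with `p^βM ⊆ F^qM` exist, `α ≤ β`, and `δ = β - α` is the minimal non-negative integer
such that `p^δ·φ` maps `F^qM` into `F^qM` for every `W(k)`-linear endomorphism `φ` of `M`. -/
theorem delta_q_eq_beta_sub_alpha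
    [Module.Free (WittVector p k) M] [Module.Finite (WittVector p k) M] [Nontrivial M]
    (F : M → M)
    (hFadd : ∀ x y, F (x + y) = F x + F y)
    (hFsmul : ∀ (a : WittVector p k) (x : M), F (a • x) = WittVector.frobeniusEquiv p k a • F x)
    (hFinj : Function.Injective F)
    (q : ℕ) :
    ∃ α β : ℕ,
      IsGreatest {a : ℕ | ∀ x ∈ Submodule.span (WittVector p k) (Set.range (F^[q])),
        ∃ y : M, x = ((p : WittVector p k) ^ a) • y} α ∧
      IsLeast {b : ℕ | ∀ x : M,
        ((p : WittVector p k) ^ b) • x ∈ Submodule.span (WittVector p k) (Set.range (F^[q]))} β ∧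
      α ≤ β ∧
      IsLeast {δ : ℕ | ∀ φ : M →ₗ[WittVector p k] M,
        ∀ x ∈ Submodule.span (WittVector p k) (Set.range (F^[q])),
          ((p : WittVector p k) ^ δ) • φ x ∈
            Submodule.span (WittVector p k) (Set.range (F^[q]))} (β - α) := by
  classical
  let b := Free.chooseBasis (WittVector p k) M
  let F' : AddMonoid.End M := AddMonoidHom.mk' F hFadd
  -- `⇑(F' ^ q)` is `F^[q]` by definition
  have hli : LinearIndependent (WittVector p k) (F^[q] ∘ b) :=
    b.linearIndependent.map_of_surjective_injectiveₛ _ (F' ^ q)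
      ((WittVector.frobeniusEquiv p k).surjective.iterate q) (hFinj.iterate q)
      (iterate_map_smul_of_map_smul hFsmul q)
  refine Submodule.exists_isGreatest_isLeast_isLeast_sub (WittVector.irreducible p) _
    (b.det_ne_zero_of_linearIndependent hli) fun x => ?_
  exact Submodule.span_mono (Set.range_comp_subset_range _ _) (b.det_smul_mem_span_range _ x)

end DieudonneStmt
end
end

section
/- Let (M, F_M, V_M) and (L, F_L, V_L) be Dieudonné modules over k and let m ≥ 1 be an integer. Let ζ_m : M/p^mM → L/p^mL be a W-linear map commuting with the maps induced by F and by V (a homomorphism of truncated Dieudonné modules). Then there exist W-linear maps ζ : M → L and τ : M → L such that the reduction of ζ modulo p^m equals ζ_m and F_L∘ζ − ζ∘F_M = p^m·(τ∘F_M). -/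
/-!
Lift `ζ_m` to any `W`-linear `ζ₀ : M → L`. Its defects `F ζ₀ - ζ₀ F` and `V ζ₀ - ζ₀ V` are
`p^m η` and `p^m w` with `η` σ-linear and `w` σ⁻¹-linear, and differentiating `V F = F V = p`
gives `w ∘ F = -V ∘ η` and `η ∘ V = -F ∘ w`. Replacing `ζ₀` by `ζ₀ + p^m ξ` replaces `η` by
`η + F ξ - ξ F`, and a σ-linear map `η'` factors as `τ ∘ F` with `τ` linear as soon as `η' ∘ V`
takes values in `pL` (then `τ = (η' ∘ V) / p`). For `η' = η + F ξ - ξ F` this holds when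
`ξ ∘ V ≡ w` modulo `V L`. Such a `ξ` exists: `w ∘ V⁻¹` is a linear map on `V M ⊇ pM` which
modulo `V L` vanishes on `pM = V (F M)`, and over the discrete valuation ring `W` such a map
extends from `V M` to `M` (Smith normal form).
-/

theorem Submodule.Quotient.mk_eq_mk_iff_exists_smul_eq {R M : Type*} [CommRing R] [AddCommGroup M]
    [Module R M] {c : R} {x y : M} :
    (Submodule.Quotient.mk x : M ⧸ Ideal.span {c} • (⊤ : Submodule R M)) = Submodule.Quotient.mk y ↔
      ∃ z, c • z = x - y := by
  rw [Submodule.Quotient.eq, Submodule.ideal_span_singleton_smul,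
    Submodule.mem_smul_pointwise_iff_exists]
  simp

theorem LinearMap.exists_lift_quotient {R M L : Type*} [CommRing R] [AddCommGroup M] [Module R M]
    [Module.Projective R M] [AddCommGroup L] [Module R L] {P : Submodule R M} {Q : Submodule R L}
    (ζ : M ⧸ P →ₗ[R] L ⧸ Q) :
    ∃ ζ' : M →ₗ[R] L, ∀ x, ζ (Submodule.Quotient.mk x) = Submodule.Quotient.mk (ζ' x) := by
  obtain ⟨ζ', hζ'⟩ := Module.projective_lifting_property Q.mkQ (ζ ∘ₗ P.mkQ) Q.mkQ_surjective
  exact ⟨ζ', fun x => (LinearMap.congr_fun hζ' x).symm⟩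

theorem LinearMap.exists_smul_eq_of_forall_exists_smul_eq {R M L : Type*} [CommRing R]
    [AddCommGroup M] [Module R M] [AddCommGroup L] [Module R L] {σ : R →+* R} {c : R}
    (hc : IsSMulRegular L c) (g : M →ₛₗ[σ] L) (hg : ∀ x, ∃ y, c • y = g x) :
    ∃ f : M →ₛₗ[σ] L, ∀ x, c • f x = g x := by
  choose f hf using hg
  refine ⟨{ toFun := f, map_add' := fun x y => hc ?_, map_smul' := fun a x => hc ?_ }, hf⟩
  · simp only [smul_add, hf, map_add]
  · simp only [hf, map_smulₛₗ, smul_comm c (σ a)]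

theorem LinearMap.exists_comp_eq_of_forall_exists_smul_eq {R M L : Type*} [CommRing R]
    [AddCommGroup M] [Module R M] [AddCommGroup L] [Module R L] {σ σ' : R →+* R}
    [RingHomInvPair σ σ'] {c : R} (hc : IsSMulRegular L c) (hσc : σ c = c)
    (F : M →ₛₗ[σ] M) (V : M →ₛₗ[σ'] M) (hVF : ∀ x, V (F x) = c • x)
    (η : M →ₛₗ[σ] L) (hη : ∀ y, ∃ l, c • l = η (V y)) :
    ∃ τ : M →ₗ[R] L, ∀ x, τ (F x) = η x := by
  obtain ⟨τ, hτ⟩ := (η.comp V : M →ₗ[R] L).exists_smul_eq_of_forall_exists_smul_eq hc hη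
  refine ⟨τ, fun x => hc ?_⟩
  simp only [hτ, LinearMap.comp_apply, hVF, map_smulₛₗ, hσc]

theorem defect_comp_eq_neg_comp_defect {R M L : Type*} [CommRing R] [AddCommGroup M] [Module R M]
    [AddCommGroup L] [Module R L] {σ' : R →+* R} {c d : R} (hd : IsSMulRegular L d)
    (hσd : σ' d = d) (ζ : M →ₗ[R] L) (AM BM : M → M) (AL : L → L) (BL : L →ₛₗ[σ'] L)
    (hBAM : ∀ x, BM (AM x) = c • x) (hBAL : ∀ x, BL (AL x) = c • x) (a b : M → L)
    (ha : ∀ x, AL (ζ x) - ζ (AM x) = d • a x) (hb : ∀ x, BL (ζ x) - ζ (BM x) = d • b x) (x : M) :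
    b (AM x) = -BL (a x) := by
  apply hd
  calc d • b (AM x) = BL (ζ (AM x)) - ζ (BM (AM x)) := (hb _).symm
    _ = BL (AL (ζ x) - d • a x) - c • ζ x := by rw [← ha, sub_sub_cancel, hBAM, map_smul]
    _ = d • -BL (a x) := by rw [map_sub, map_smulₛₗ, hσd, hBAL]; module

theorem LinearMap.exists_extend_of_irreducible_smul_eq_zero {R M Q : Type*} [CommRing R]
    [IsDomain R] [IsDiscreteValuationRing R] [AddCommGroup M] [Module R M] [Module.Free R M]
    [Module.Finite R M] [AddCommGroup Q] [Module R Q] {ϖ : R} (hϖ : Irreducible ϖ) {N : Submodule R M}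
    (g : N →ₗ[R] Q) (hg : ∀ (z : N) (x : M), ϖ • x = z → g z = 0) :
    ∃ f : M →ₗ[R] Q, f ∘ₗ N.subtype = g := by
  classical
  obtain ⟨n, snf⟩ := N.smithNormalForm (Module.Free.chooseBasis R M)
  let v : Fin n → Q := fun i => if h : IsUnit (snf.a i) then h.unit⁻¹ • g (snf.bN i) else 0
  refine ⟨snf.bM.constr ℕ (Function.extend snf.f v 0), snf.bN.ext fun i => ?_⟩
  rw [LinearMap.comp_apply, Submodule.subtype_apply, snf.snf, map_smul, Module.Basis.constr_basis,
    snf.f.injective.extend_apply]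
  by_cases hunit : IsUnit (snf.a i)
  · simp only [v, dif_pos hunit]
    exact smul_inv_smul hunit.unit _
  · obtain ⟨t, ht⟩ : ϖ ∣ snf.a i := by
      rwa [← Ideal.mem_span_singleton, ← hϖ.maximalIdeal_eq]
    simp only [v, dif_neg hunit, smul_zero]
    refine (hg _ (t • snf.bM (snf.f i)) ?_).symm
    rw [snf.snf, ht, mul_smul]

theorem LinearMap.exists_comp_sub_mem_of_irreducible {R M L : Type*} [CommRing R] [IsDomain R]
    [IsDiscreteValuationRing R] [AddCommGroup M] [Module R M] [Module.Free R M] [Module.Finite R M]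
    [AddCommGroup L] [Module R L] {σ σ' : R →+* R} [RingHomInvPair σ σ'] [RingHomInvPair σ' σ]
    {ϖ : R} (hϖ : Irreducible ϖ) (V : M →ₛₗ[σ'] M) (hV : Function.Injective V)
    (P : Submodule R L) (w : M →ₛₗ[σ'] L) (hw : ∀ y x, V y = ϖ • x → w y ∈ P) :
    ∃ f : M →ₗ[R] L, ∀ y, f (V y) - w y ∈ P := by
  let e := LinearEquiv.ofInjective V hV
  let g : LinearMap.range V →ₗ[R] L ⧸ P := P.mkQ ∘ₗ (w ∘ₛₗ e.symm.toLinearMap)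
  have hg : ∀ y, g (e y) = P.mkQ (w y) := fun y => by simp [g]
  obtain ⟨f', hf'⟩ := g.exists_extend_of_irreducible_smul_eq_zero hϖ fun z x hx => by
    obtain ⟨y, rfl⟩ := e.surjective z
    rw [hg, Submodule.mkQ_apply, Submodule.Quotient.mk_eq_zero]
    exact hw y x (by rw [hx, LinearEquiv.ofInjective_apply])
  obtain ⟨f, hf⟩ := Module.projective_lifting_property P.mkQ f' P.mkQ_surjective
  refine ⟨f, fun y => ?_⟩
  have hfV : P.mkQ (f (V y)) = P.mkQ (w y) := by
    rw [← LinearMap.comp_apply, hf, ← hg, ← LinearMap.congr_fun hf' (e y)]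
    rfl
  exact (Submodule.Quotient.eq P).mp hfV

namespace DieudonneStmt

section

variable {p : ℕ} [Fact p.Prime] {k : Type*} [Field k] [CharP k p] [PerfectRing k p]

local notation "W" => WittVector p k
local notation "σ" => (WittVector.frobeniusEquiv p k : W →+* W)
local notation "σ⁻¹" => (RingEquiv.symm (WittVector.frobeniusEquiv p k) : W →+* W)

instance ringHomInvPair_frobeniusEquiv : RingHomInvPair σ σ⁻¹ := .of_ringEquiv _
instance ringHomInvPair_frobeniusEquiv_symm : RingHomInvPair σ⁻¹ σ := .of_ringEquiv_symm _

variable {M L : Type*} [AddCommGroup M] [Module (WittVector p k) M]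
  [Module.Free (WittVector p k) M] [Module.Finite (WittVector p k) M]
  [AddCommGroup L] [Module (WittVector p k) L] [Module.Free (WittVector p k) L]

theorem exists_add_frobenius_defect_eq_comp (FM : M →ₛₗ[σ] M) (VM : M →ₛₗ[σ⁻¹] M)
    (FL : L →ₛₗ[σ] L) (VL : L →ₛₗ[σ⁻¹] L) (hFVM : ∀ x, FM (VM x) = (p : W) • x)
    (hVFM : ∀ x, VM (FM x) = (p : W) • x) (hFVL : ∀ x, FL (VL x) = (p : W) • x)
    (η : M →ₛₗ[σ] L) (w : M →ₛₗ[σ⁻¹] L) (hwF : ∀ x, w (FM x) = -VL (η x))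
    (hηV : ∀ y, η (VM y) = -FL (w y)) :
    ∃ ξ τ : M →ₗ[W] L, ∀ x, η x + FL (ξ x) - ξ (FM x) = τ (FM x) := by
  have hp : Irreducible (p : W) := WittVector.irreducible p
  have hVM : Function.Injective VM := fun x y h =>
    IsSMulRegular.of_ne_zero hp.ne_zero (by rw [← hFVM x, h, hFVM] : (p : W) • x = (p : W) • y)
  obtain ⟨ξ, hξ⟩ := VM.exists_comp_sub_mem_of_irreducible hp hVM (LinearMap.range VL) w
    fun y x hyx => by
      rw [hVM (hyx.trans (hVFM x).symm), hwF]
      exact neg_mem (LinearMap.mem_range_self VL _)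
  obtain ⟨τ, hτ⟩ := LinearMap.exists_comp_eq_of_forall_exists_smul_eq
    (IsSMulRegular.of_ne_zero hp.ne_zero) (map_natCast _ _) FM VM hVFM
    (η + FL.comp ξ - ξ.comp FM) fun y => by
      obtain ⟨l, hl⟩ := hξ y
      refine ⟨l - ξ y, ?_⟩
      rw [smul_sub, ← hFVL, hl, map_sub]
      simp only [LinearMap.sub_apply, LinearMap.add_apply, LinearMap.comp_apply, hηV, hFVM,
        map_smul]
      abel
  exact ⟨ξ, τ, fun x => (hτ x).symm⟩

theorem exists_lift_of_truncated_semilinear (FM : M →ₛₗ[σ] M) (VM : M →ₛₗ[σ⁻¹] M)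
    (FL : L →ₛₗ[σ] L) (VL : L →ₛₗ[σ⁻¹] L) (hFVM : ∀ x, FM (VM x) = (p : W) • x)
    (hVFM : ∀ x, VM (FM x) = (p : W) • x) (hFVL : ∀ x, FL (VL x) = (p : W) • x)
    (hVFL : ∀ x, VL (FL x) = (p : W) • x) (m : ℕ)
    (ζm : (M ⧸ Ideal.span {(p : W) ^ m} • (⊤ : Submodule W M)) →ₗ[W]
      (L ⧸ Ideal.span {(p : W) ^ m} • (⊤ : Submodule W L)))
    (hζF : ∀ x y, ζm (Submodule.Quotient.mk x) = Submodule.Quotient.mk y →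
      ζm (Submodule.Quotient.mk (FM x)) = Submodule.Quotient.mk (FL y))
    (hζV : ∀ x y, ζm (Submodule.Quotient.mk x) = Submodule.Quotient.mk y →
      ζm (Submodule.Quotient.mk (VM x)) = Submodule.Quotient.mk (VL y)) :
    ∃ ζ τ : M →ₗ[W] L,
      (∀ x, ζm (Submodule.Quotient.mk x) = Submodule.Quotient.mk (ζ x)) ∧
      (∀ x, FL (ζ x) - ζ (FM x) = (p : W) ^ m • τ (FM x)) := by
  have hpm : IsSMulRegular L ((p : W) ^ m) :=
    IsSMulRegular.of_ne_zero (pow_ne_zero _ (WittVector.irreducible p).ne_zero)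
  have hσpm (σ' : W →+* W) : σ' ((p : W) ^ m) = (p : W) ^ m := by rw [map_pow, map_natCast]
  obtain ⟨ζ₀, hζ₀⟩ := LinearMap.exists_lift_quotient ζm
  obtain ⟨η, hη⟩ := (FL.comp ζ₀ - ζ₀.comp FM).exists_smul_eq_of_forall_exists_smul_eq hpm fun x =>
    Submodule.Quotient.mk_eq_mk_iff_exists_smul_eq.mp ((hζF x _ (hζ₀ x)).symm.trans (hζ₀ (FM x)))
  obtain ⟨w, hw⟩ := (VL.comp ζ₀ - ζ₀.comp VM).exists_smul_eq_of_forall_exists_smul_eq hpm fun x =>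
    Submodule.Quotient.mk_eq_mk_iff_exists_smul_eq.mp ((hζV x _ (hζ₀ x)).symm.trans (hζ₀ (VM x)))
  obtain ⟨ξ, τ, hξτ⟩ := exists_add_frobenius_defect_eq_comp FM VM FL VL hFVM hVFM hFVL η w
    (defect_comp_eq_neg_comp_defect hpm (hσpm _) ζ₀ FM VM FL VL hVFM hVFL η w
      (fun x => (hη x).symm) (fun x => (hw x).symm))
    (defect_comp_eq_neg_comp_defect hpm (hσpm _) ζ₀ VM FM VL FL hFVM hFVL w η
      (fun x => (hw x).symm) (fun x => (hη x).symm))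
  refine ⟨ζ₀ + (p : W) ^ m • ξ, τ, fun x => ?_, fun x => ?_⟩
  · rw [hζ₀, Submodule.Quotient.mk_eq_mk_iff_exists_smul_eq]
    exact ⟨-ξ x, by simp⟩
  · rw [← hξτ, LinearMap.add_apply, LinearMap.smul_apply, map_add, map_smulₛₗ, hσpm,
      LinearMap.add_apply, LinearMap.smul_apply, smul_sub, smul_add, hη, LinearMap.sub_apply,
      LinearMap.comp_apply, LinearMap.comp_apply]
    abel

end

variable (p : ℕ) [Fact p.Prime] (k : Type*) [Field k] [IsAlgClosed k] [CharP k p]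

theorem lift_of_truncated_homomorphism
    (M : Type*) [AddCommGroup M] [Module (WittVector p k) M]
    [Module.Free (WittVector p k) M] [Module.Finite (WittVector p k) M]
    (L : Type*) [AddCommGroup L] [Module (WittVector p k) L]
    [Module.Free (WittVector p k) L]
    (FM VM : M → M) (FL VL : L → L)
    (hFMadd : ∀ x y, FM (x + y) = FM x + FM y)
    (hVMadd : ∀ x y, VM (x + y) = VM x + VM y)
    (hFMsmul : ∀ (a : WittVector p k) (x : M), FM (a • x) = WittVector.frobeniusEquiv p k a • FM x)
    (hVMsmul : ∀ (a : WittVector p k) (x : M),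
      VM (a • x) = (WittVector.frobeniusEquiv p k).symm a • VM x)
    (hFVM : ∀ x, FM (VM x) = (p : WittVector p k) • x)
    (hVFM : ∀ x, VM (FM x) = (p : WittVector p k) • x)
    (hFLadd : ∀ x y, FL (x + y) = FL x + FL y)
    (hVLadd : ∀ x y, VL (x + y) = VL x + VL y)
    (hFLsmul : ∀ (a : WittVector p k) (x : L), FL (a • x) = WittVector.frobeniusEquiv p k a • FL x)
    (hVLsmul : ∀ (a : WittVector p k) (x : L),
      VL (a • x) = (WittVector.frobeniusEquiv p k).symm a • VL x)
    (hFVL : ∀ x, FL (VL x) = (p : WittVector p k) • x)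
    (hVFL : ∀ x, VL (FL x) = (p : WittVector p k) • x)
    (m : ℕ)
    -- the homomorphism of truncated Dieudonné modules `ζ_m : M/p^mM → L/p^mL`
    (ζm : (M ⧸ (Ideal.span {(p : WittVector p k) ^ m} • (⊤ : Submodule (WittVector p k) M))) →ₗ[WittVector p k]
      (L ⧸ (Ideal.span {(p : WittVector p k) ^ m} • (⊤ : Submodule (WittVector p k) L))))
    -- `ζ_m` commutes with the maps induced by `F` and by `V`
    (hζF : ∀ (x : M) (y : L), ζm (Submodule.Quotient.mk x) = Submodule.Quotient.mk y →
      ζm (Submodule.Quotient.mk (FM x)) = Submodule.Quotient.mk (FL y))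
    (hζV : ∀ (x : M) (y : L), ζm (Submodule.Quotient.mk x) = Submodule.Quotient.mk y →
      ζm (Submodule.Quotient.mk (VM x)) = Submodule.Quotient.mk (VL y)) :
    ∃ ζ τ : M →ₗ[WittVector p k] L,
      (∀ x : M, ζm (Submodule.Quotient.mk x) = Submodule.Quotient.mk (ζ x)) ∧
      (∀ x : M, FL (ζ x) - ζ (FM x) = ((p : WittVector p k) ^ m) • τ (FM x)) := by
  exact exists_lift_of_truncated_semilinear ⟨⟨FM, hFMadd⟩, hFMsmul⟩ ⟨⟨VM, hVMadd⟩, hVMsmul⟩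
    ⟨⟨FL, hFLadd⟩, hFLsmul⟩ ⟨⟨VL, hVLadd⟩, hVLsmul⟩ hFVM hVFM hFVL hVFL m ζm hζF hζV

end DieudonneStmt
end

section
/- Let N₊, N₀, N₋ be finite-dimensional B(k)-vector spaces, each equipped with a σ-semilinear bijection F, and set N = N₊ ⊕ N₀ ⊕ N₋ with F acting diagonally. Let O₊ ⊆ N₊ be a W-lattice with F(O₊) ⊆ O₊ such that for every x ∈ O₊ the iterates F^i(x) converge to 0 p-adically (for every s ∈ ℕ, F^i(x) ∈ p^sO₊ for all sufficiently large i); let O₋ ⊆ N₋ be a W-lattice with F⁻¹(O₋) ⊆ O₋ such that for every x ∈ O₋ the iterates F^{−i}(x) converge to 0 p-adically; and let O₀ ⊆ N₀ be a W-lattice admitting a W-basis consisting of vectors fixed by F. Set O = O₊ ⊕ O₀ ⊕ O₋. Then: for every x ∈ O there exists y ∈ O with x = F(y) − y (an equation in N); any two such solutions y differ by an element y₀ ∈ O with F(y₀) = y₀; and if x ∈ p^sO for some s ∈ ℕ, then a solution y can be chosen in p^sO. -/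
/-!
An additive map between `p`-adically complete and separated abelian groups that is surjective
modulo `p` is surjective, and finite `W(k)`-modules are `p`-adically complete; so it suffices to
solve `F y - y ≡ x` modulo `p` on each summand. On `O₊`, if `F^m x ∈ pO₊` then
`y = -(x + F x + ⋯ + F^(m-1) x)` works. On `O₋` one solves the same problem for `F⁻¹`. On `O₀`
the fixed basis reduces everything to `σ b - b = a` in `W(k)`, which modulo `p` is the
Artin–Schreier equation `t^p - t = a₀`, solvable since `k` is algebraically closed.
-/

noncomputable section

open Polynomial in
theorem IsAlgClosed.exists_pow_sub_self_eq {k : Type*} [Field k] [IsAlgClosed k] {n : ℕ}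
    (hn : 2 ≤ n) (a : k) : ∃ t : k, t ^ n - t = a := by
  have hdeg : (X ^ n - (X + C a) : k[X]).degree = n := by
    rw [degree_sub_eq_left_of_degree_lt] <;> rw [degree_X_pow]
    rw [degree_X_add_C]
    exact_mod_cast hn
  obtain ⟨t, ht⟩ := IsAlgClosed.exists_root _ (by rw [hdeg]; exact_mod_cast (by omega : n ≠ 0))
  exact ⟨t, sub_eq_iff_eq_add'.mpr (by simpa [sub_eq_zero] using ht)⟩

theorem IsPrecomplete.of_finite {R M : Type*} [CommRing R] (I : Ideal R) [AddCommGroup M]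
    [Module R M] [IsPrecomplete I R] [Module.Finite R M] : IsPrecomplete I M := by
  refine AdicCompletion.of_surjective_iff.mp fun x => ?_
  obtain ⟨t, rfl⟩ := AdicCompletion.ofTensorProduct_surjective_of_finite I M x
  induction t using TensorProduct.induction_on with
  | zero => exact ⟨0, by simp⟩
  | tmul r m =>
    obtain ⟨r, rfl⟩ := AdicCompletion.of_surjective I R r
    refine ⟨r • m, ?_⟩
    rw [AdicCompletion.ofTensorProduct_tmul, map_smul]
    exact (algebraMap_smul (AdicCompletion I R) r _).symm
  | add s t hs ht =>
    obtain ⟨a, ha⟩ := hs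
    obtain ⟨b, hb⟩ := ht
    exact ⟨a + b, by rw [map_add, map_add, ha, hb]⟩

theorem exists_iterate_eq_nsmul {R S N : Type*} [Semiring R] [Semiring S] [AddCommGroup N]
    [Module R N] [Module S N] (O : Submodule R N) (n : ℕ) {T : N → N}
    (hT : ∀ x ∈ O, ∀ s : ℕ, ∃ m : ℕ, ∀ i : ℕ, m ≤ i → ∃ y ∈ O, T^[i] x = ((n : S) ^ s) • y) :
    ∀ x ∈ O, ∃ m, ∃ u ∈ O, T^[m] x = n • u := fun x hx =>
  (hT x hx 1).imp fun m hm => by simpa only [pow_one, Nat.cast_smul_eq_nsmul] using hm m le_rfl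

namespace AddMonoidHom

variable {M N : Type*} [AddCommGroup M] [AddCommGroup N] (n : ℕ)

theorem surjective_of_surjective_mod [IsPrecomplete (Ideal.span {(n : ℤ)}) M]
    [IsHausdorff (Ideal.span {(n : ℤ)}) N] (f : M →+ N) (hf : ∀ y, ∃ x u, f x - y = n • u) :
    Function.Surjective f := by
  refine surjective_of_mkQ_comp_surjective (I := Ideal.span {(n : ℤ)}) (f := f.toIntLinearMap)
    fun y => ?_
  obtain ⟨y, rfl⟩ := Submodule.mkQ_surjective _ y
  obtain ⟨x, u, hxu⟩ := hf y
  refine ⟨x, (Submodule.Quotient.eq _).mpr ?_⟩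
  rw [Submodule.ideal_span_singleton_smul, Submodule.mem_smul_pointwise_iff_exists]
  exact ⟨u, Submodule.mem_top, by rw [natCast_zsmul, ← hxu]; rfl⟩

theorem exists_sub_self_eq_of_iterate_eq_nsmul [IsAdicComplete (Ideal.span {(n : ℤ)}) M]
    (T : M →+ M) (hT : ∀ x, ∃ m u, T^[m] x = n • u) (x : M) : ∃ y, T y - y = x :=
  surjective_of_surjective_mod n (T - AddMonoidHom.id M) (fun x => by
    obtain ⟨m, u, hu⟩ := hT x
    refine ⟨-∑ i ∈ Finset.range m, T^[i] x, -u, ?_⟩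
    have htel := Finset.sum_range_sub (fun i => T^[i] x) m
    simp only [Function.iterate_succ_apply', Function.iterate_zero_apply] at htel
    simp only [sub_apply, id_apply, map_neg, map_sum, htel, hu, smul_neg]
    abel) x

end AddMonoidHom

namespace WittVector

variable {p : ℕ} [Fact p.Prime] {k : Type*} [Field k] [CharP k p]

section Perfect

variable [PerfectRing k p]

theorem isAdicComplete_int_of_finite (M : Type*) [AddCommGroup M] [Module (WittVector p k) M]
    [Module.Finite (WittVector p k) M] : IsAdicComplete (Ideal.span {(p : ℤ)}) M := by
  have hmap : (Ideal.span {(p : ℤ)}).map (algebraMap ℤ (WittVector p k))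
      = Ideal.span {(p : WittVector p k)} := by
    rw [Ideal.map_span, Set.image_singleton, map_natCast]
  have hp : Ideal.span {(p : WittVector p k)} ≠ ⊤ := by
    rw [Ne, Ideal.span_singleton_eq_top]
    exact (irreducible p).not_isUnit
  rw [← IsAdicComplete.map_algebraMap_iff (S := WittVector p k), hmap]
  exact { toIsHausdorff := .of_isLocalRing _ M hp, toIsPrecomplete := .of_finite _ }

variable {N : Type*} [AddCommGroup N] [Module (WittVector p k) N]

theorem exists_sub_self_eq_of_iterate_eq_nsmul (O : Submodule (WittVector p k) N)
    [Module.Finite (WittVector p k) O]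
    (T : N →+ N) (hTO : ∀ x ∈ O, T x ∈ O) (hT : ∀ x ∈ O, ∃ m, ∃ u ∈ O, T^[m] x = p • u)
    {x : N} (hx : x ∈ O) : ∃ y ∈ O, T y - y = x := by
  have := isAdicComplete_int_of_finite (p := p) (k := k) O
  set T' : O →+ O := (T.domRestrict O).codRestrict O fun z => hTO z z.2
  have hiter (m : ℕ) (z : O) : ((T'^[m] z : O) : N) = T^[m] z :=
    Function.Semiconj.iterate_right (f := Subtype.val) (fun _ => rfl) m z
  have hT' (z : O) : ∃ m u, T'^[m] z = p • u := by
    obtain ⟨m, u, hu, hTu⟩ := hT z z.2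
    exact ⟨m, ⟨u, hu⟩, Subtype.ext (by rw [hiter, hTu]; rfl)⟩
  obtain ⟨y, hy⟩ := T'.exists_sub_self_eq_of_iterate_eq_nsmul p hT' ⟨x, hx⟩
  exact ⟨y, y.2, congrArg Subtype.val hy⟩

theorem exists_sub_self_eq_of_leftInverse (O : Submodule (WittVector p k) N)
    [Module.Finite (WittVector p k) O]
    (F G : N →+ N) (hFG : ∀ x, F (G x) = x) (hGO : ∀ x ∈ O, G x ∈ O)
    (hG : ∀ x ∈ O, ∃ m, ∃ u ∈ O, G^[m] x = p • u) {x : N} (hx : x ∈ O) :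
    ∃ y ∈ O, F y - y = x := by
  obtain ⟨y, hy, hGy⟩ := exists_sub_self_eq_of_iterate_eq_nsmul O G hGO hG (O.neg_mem (hGO x hx))
  have hyGy : y - G y = G x := by rw [← neg_sub, hGy, neg_neg]
  exact ⟨y, hy, by rw [← hFG x, ← hyGy, map_sub, hFG]⟩

end Perfect

theorem exists_frobenius_sub_self_eq [IsAlgClosed k] (a : WittVector p k) :
    ∃ b, frobenius b - b = a := by
  have := isAdicComplete_int_of_finite (p := p) (k := k) (WittVector p k)
  refine AddMonoidHom.surjective_of_surjective_mod p
    ((frobenius : WittVector p k →+* WittVector p k).toAddMonoidHom - AddMonoidHom.id _)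
    (fun c => ?_) a
  obtain ⟨t, ht⟩ := IsAlgClosed.exists_pow_sub_self_eq (Fact.out : p.Prime).two_le (c.coeff 0)
  have h0 : (frobenius (teichmuller p t) - teichmuller p t - c).coeff 0 = 0 := by
    rw [← constantCoeff_apply, map_sub, map_sub]
    simp only [constantCoeff_apply, coeff_frobenius_charP, teichmuller_coeff_zero, ht, sub_self]
  obtain ⟨u, hu⟩ := Ideal.mem_span_singleton'.mp ((mem_span_p_iff_coeff_zero_eq_zero _).mpr h0)
  exact ⟨teichmuller p t, u, by simpa [nsmul_eq_mul, mul_comm] using hu.symm⟩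

theorem exists_sub_self_eq_of_mem_span_fixed [IsAlgClosed k] {N : Type*} [AddCommGroup N]
    [Module (WittVector p k) N] (F : N →+ N)
    (hF : ∀ (w : WittVector p k) x, F (w • x) = frobenius w • F x)
    {ι : Type*} (b : ι → N) (hb : ∀ i, F (b i) = b i) {x : N}
    (hx : x ∈ Submodule.span (WittVector p k) (Set.range b)) :
    ∃ y ∈ Submodule.span (WittVector p k) (Set.range b), F y - y = x := by
  choose β hβ using exists_frobenius_sub_self_eq (p := p) (k := k)
  obtain ⟨c, rfl⟩ := Finsupp.mem_span_range_iff_exists_finsupp.mp hx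
  refine ⟨c.sum fun i a => β a • b i, Submodule.finsuppSum_mem _ _ _ _ fun i _ =>
    Submodule.smul_mem _ _ (Submodule.subset_span ⟨i, rfl⟩), ?_⟩
  rw [map_finsuppSum, ← Finsupp.sum_sub]
  refine Finsupp.sum_congr fun i _ => ?_
  rw [hF, hb, ← sub_smul, hβ]

end WittVector

namespace DieudonneStmt

variable (p : ℕ) [Fact p.Prime] (k : Type*) [Field k] [IsAlgClosed k] [CharP k p]

section Semilinear

variable {p k}

theorem σB_algebraMap (w : WittVector p k) :
    σB p k (algebraMap (WittVector p k) (FractionRing (WittVector p k)) w)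
      = algebraMap (WittVector p k) (FractionRing (WittVector p k)) (WittVector.frobenius w) :=
  (IsFractionRing.ringEquivOfRingEquiv_algebraMap (WittVector.frobeniusEquiv p k) w).trans
    (by rw [WittVector.frobeniusEquiv_apply])

theorem map_smul_of_map_smul_σB {N : Type*} [AddCommGroup N]
    [Module (FractionRing (WittVector p k)) N] [Module (WittVector p k) N]
    [IsScalarTower (WittVector p k) (FractionRing (WittVector p k)) N] {F : N → N}
    (hF : ∀ (a : FractionRing (WittVector p k)) (x : N), F (a • x) = σB p k a • F x)
    (w : WittVector p k) (x : N) : F (w • x) = WittVector.frobenius w • F x := by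
  rw [← algebraMap_smul (FractionRing (WittVector p k)) w x, hF, σB_algebraMap, algebraMap_smul]

end Semilinear

theorem solve_F_minus_id
    (Np N0 Nm : Type*)
    [AddCommGroup Np] [Module (FractionRing (WittVector p k)) Np]
    [Module (WittVector p k) Np]
    [AddCommGroup N0] [Module (FractionRing (WittVector p k)) N0]
    [Module (WittVector p k) N0]
    [IsScalarTower (WittVector p k) (FractionRing (WittVector p k)) N0]
    [AddCommGroup Nm] [Module (FractionRing (WittVector p k)) Nm]
    [Module (WittVector p k) Nm]
    -- the `σ`-semilinear bijections `F` on `N₊`, `N₀`, `N₋`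
    (Fp : Np → Np) (F0 : N0 → N0) (Fm : Nm → Nm)
    (hFpadd : ∀ x y, Fp (x + y) = Fp x + Fp y)
    (hF0add : ∀ x y, F0 (x + y) = F0 x + F0 y)
    (hF0smul : ∀ (a : FractionRing (WittVector p k)) (x : N0), F0 (a • x) = σB p k a • F0 x)
    (hFmadd : ∀ x y, Fm (x + y) = Fm x + Fm y)
    -- `Gm` is the inverse of `Fm`
    (Gm : Nm → Nm) (hGm : ∀ x, Fm (Gm x) = x ∧ Gm (Fm x) = x)
    -- `O₊`, `O₀`, `O₋` are `W(k)`-lattices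
    (Op : Submodule (WittVector p k) Np)
    (hOpfin : Module.Finite (WittVector p k) Op)
    (O0 : Submodule (WittVector p k) N0)
    (Om : Submodule (WittVector p k) Nm)
    (hOmfin : Module.Finite (WittVector p k) Om)
    -- `F(O₊) ⊆ O₊` and the iterates of `F` on `O₊` converge to `0` `p`-adically
    (hFOp : ∀ x ∈ Op, Fp x ∈ Op)
    (hOpconv : ∀ x ∈ Op, ∀ s : ℕ, ∃ m : ℕ, ∀ i : ℕ, m ≤ i →
      ∃ y ∈ Op, Fp^[i] x = (((p : ℕ) : FractionRing (WittVector p k)) ^ s) • y)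
    -- `F⁻¹(O₋) ⊆ O₋` and the iterates of `F⁻¹` on `O₋` converge to `0` `p`-adically
    (hFOm : ∀ x ∈ Om, Gm x ∈ Om)
    (hOmconv : ∀ x ∈ Om, ∀ s : ℕ, ∃ m : ℕ, ∀ i : ℕ, m ≤ i →
      ∃ y ∈ Om, Gm^[i] x = (((p : ℕ) : FractionRing (WittVector p k)) ^ s) • y)
    -- `O₀` has a `W(k)`-basis of vectors fixed by `F`
    (hO0basis : ∃ (ι : Type) (bb : ι → N0), (∀ i, bb i ∈ O0) ∧ (∀ i, F0 (bb i) = bb i) ∧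
      LinearIndependent (WittVector p k) bb ∧
      Submodule.span (WittVector p k) (Set.range bb) = O0) :
    -- with `N = N₊ ⊕ N₀ ⊕ N₋`, `F` diagonal, `O = O₊ ⊕ O₀ ⊕ O₋`:
    ∀ x ∈ Op.prod (O0.prod Om),
      (∃ y ∈ Op.prod (O0.prod Om),
        x = (Fp y.1, F0 y.2.1, Fm y.2.2) - y) ∧
      (∀ y ∈ Op.prod (O0.prod Om), ∀ y' ∈ Op.prod (O0.prod Om),
        x = (Fp y.1, F0 y.2.1, Fm y.2.2) - y →
        x = (Fp y'.1, F0 y'.2.1, Fm y'.2.2) - y' →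
        (y' - y ∈ Op.prod (O0.prod Om) ∧
          (Fp (y' - y).1, F0 (y' - y).2.1, Fm (y' - y).2.2) = y' - y)) ∧
      (∀ s : ℕ, (∃ x' ∈ Op.prod (O0.prod Om),
          x = (((p : ℕ) : FractionRing (WittVector p k)) ^ s) • x') →
        ∃ y' ∈ Op.prod (O0.prod Om),
          x = (let y := (((p : ℕ) : FractionRing (WittVector p k)) ^ s) • y';
            (Fp y.1, F0 y.2.1, Fm y.2.2) - y)) := by
  set Φ : Np × N0 × Nm →+ Np × N0 × Nm := (AddMonoidHom.mk' Fp hFpadd).prodMap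
    ((AddMonoidHom.mk' F0 hF0add).prodMap (AddMonoidHom.mk' Fm hFmadd))
  have hsolve : ∀ x ∈ Op.prod (O0.prod Om), ∃ y ∈ Op.prod (O0.prod Om), Φ y - y = x := by
    rintro ⟨xp, x0, xm⟩ ⟨hxp, hx0, hxm⟩
    obtain ⟨yp, hyp, hp⟩ := WittVector.exists_sub_self_eq_of_iterate_eq_nsmul Op
      (.mk' Fp hFpadd) hFOp (exists_iterate_eq_nsmul Op p hOpconv) hxp
    obtain ⟨ι, b, -, hb, -, rfl⟩ := hO0basis
    obtain ⟨y0, hy0, h0⟩ := WittVector.exists_sub_self_eq_of_mem_span_fixed (.mk' F0 hF0add)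
      (map_smul_of_map_smul_σB hF0smul) b hb hx0
    obtain ⟨ym, hym, hm⟩ := WittVector.exists_sub_self_eq_of_leftInverse Om (.mk' Fm hFmadd)
      ((AddMonoidHom.mk' Fm hFmadd).inverse Gm (fun x => (hGm x).2) fun x => (hGm x).1)
      (fun x => (hGm x).1) hFOm
      (exists_iterate_eq_nsmul Om p hOmconv) hxm
    exact ⟨(yp, y0, ym), ⟨hyp, hy0, hym⟩, Prod.ext hp (Prod.ext h0 hm)⟩
  intro x hx
  refine ⟨?_, fun y hy y' hy' hxy hxy' => ⟨sub_mem hy' hy, ?_⟩, ?_⟩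
  · obtain ⟨y, hy, rfl⟩ := hsolve x hx
    exact ⟨y, hy, rfl⟩
  · change Φ (y' - y) = y' - y
    rw [map_sub]
    exact sub_eq_sub_iff_sub_eq_sub.mp (hxy'.symm.trans hxy)
  · rintro s ⟨x', hx', rfl⟩
    obtain ⟨y, hy, rfl⟩ := hsolve x' hx'
    refine ⟨y, hy, ?_⟩
    set c : FractionRing (WittVector p k) := (p : FractionRing (WittVector p k)) ^ s with hc
    show c • (Φ y - y) = Φ (c • y) - c • y
    rw [hc, ← Nat.cast_pow, map_natCast_smul Φ (FractionRing (WittVector p k))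
      (FractionRing (WittVector p k)), smul_sub]

end DieudonneStmt
end
end

section
/- Let M be a non-zero bi-nilpotent Dieudonné module over k which is generated by an element z ∈ M, with d = dim_k(M/FM) and c = dim_k(M/VM), and suppose that F^c z + V^d z = 0. Then F^{c+d}M = p^d M; indeed F^{c+d}(b) = −p^d·b for every element b of the W-basis of M formed by F^iz (1 ≤ i ≤ c) and V^iz (0 ≤ i ≤ d−1). -/
/-! Since `F ∘ V = V ∘ F = p`, the operators `F` and `V` commute, so `T = F^{c+d}` and
`p^d` both commute with `F` and `V`. The relation gives `T z = F^d (F^c z) = -F^d (V^d z) = -p^d z`,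
and commuting `F^i`, `V^i` past `T` gives the formula on the basis. For the equality of
submodules: the preimage under `T` of the `F`,`V`-stable submodule `p^d M` is an `F`,`V`-stable
submodule containing `z`, hence all of `M`; symmetrically for the preimage of `F^{c+d} M`
under `p^d`. -/

theorem Function.Commute.apply_iterate_eq_of_apply_eq {α : Type*} {T S G : α → α}
    (hTG : Function.Commute T G) (hSG : Function.Commute S G) {z : α} (hz : T z = S z) (i : ℕ) :
    T (G^[i] z) = S (G^[i] z) := by
  rw [(hTG.iterate_right i).eq, hz, (hSG.iterate_right i).eq]

namespace LinearMap

variable {R M : Type*} [Semiring R] [AddCommMonoid M] [Module R M] {σ : R →+* R}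

def iterate (f : M →ₛₗ[σ] M) (n : ℕ) : M →ₛₗ[σ ^ n] M where
  toFun := f^[n]
  map_add' := iterate_map_add f n
  map_smul' a x := by
    induction n generalizing a x with
    | zero => rfl
    | succ n ih => exact (congrArg _ (f.map_smulₛₗ a x)).trans (ih (σ a) (f x))

end LinearMap

namespace DieudonneStmt

def IsGenerator (R : Type*) {M : Type*} [Semiring R] [AddCommMonoid M] [Module R M]
    (F V : M → M) (z : M) : Prop :=
  ∀ P : Submodule R M, z ∈ P → (∀ x ∈ P, F x ∈ P) → (∀ x ∈ P, V x ∈ P) → P = ⊤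

section Semiring

variable {R M : Type*} [Semiring R] [AddCommMonoid M] [Module R M] {σ τ ρ ρ' : R →+* R}

theorem commute_natCast_smul (f : M →ₛₗ[σ] M) (n : ℕ) : Function.Commute f ((n : R) • ·) :=
  map_natCast_smul f R R n

theorem commute_natCast_pow_smul (f : M →ₛₗ[σ] M) (p e : ℕ) :
    Function.Commute f ((p : R) ^ e • ·) := by
  simpa only [Nat.cast_pow] using commute_natCast_smul f (p ^ e)

theorem mem_span_range_of_commute (G : M →ₛₗ[σ] M) {φ : M → M} (hGφ : Function.Commute G φ)
    {y : M} (hy : y ∈ Submodule.span R (Set.range φ)) : G y ∈ Submodule.span R (Set.range φ) := by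
  induction hy using Submodule.span_induction with
  | mem w hw =>
    obtain ⟨u, rfl⟩ := hw
    exact Submodule.subset_span ⟨G u, (hGφ u).symm⟩
  | zero => simp
  | add a b _ _ ha hb => simpa using Submodule.add_mem _ ha hb
  | smul a x _ hx => simpa using Submodule.smul_mem _ (σ a) hx

theorem span_range_le_of_isGenerator {F V : M → M} {z : M} (hz : IsGenerator R F V z)
    (φ : M →ₛₗ[ρ] M) (hFφ : Function.Commute F φ) (hVφ : Function.Commute V φ)
    {P : Submodule R M} (hPF : ∀ x ∈ P, F x ∈ P) (hPV : ∀ x ∈ P, V x ∈ P) (hφz : φ z ∈ P) :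
    Submodule.span R (Set.range φ) ≤ P := by
  have htop : P.comap φ = ⊤ := hz _ hφz
    (fun x hx => by simpa [Submodule.mem_comap, ← hFφ x] using hPF _ hx)
    (fun x hx => by simpa [Submodule.mem_comap, ← hVφ x] using hPV _ hx)
  rw [Submodule.span_le]
  rintro _ ⟨x, rfl⟩
  exact Submodule.mem_comap.mp (htop ▸ Submodule.mem_top)

theorem span_range_eq_of_isGenerator {F : M →ₛₗ[σ] M} {V : M →ₛₗ[τ] M} {z : M}
    (hz : IsGenerator R F V z) (φ : M →ₛₗ[ρ] M) (ψ : M →ₛₗ[ρ'] M)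
    (hFφ : Function.Commute F φ) (hVφ : Function.Commute V φ)
    (hFψ : Function.Commute F ψ) (hVψ : Function.Commute V ψ)
    (hφz : φ z ∈ Submodule.span R (Set.range ψ)) (hψz : ψ z ∈ Submodule.span R (Set.range φ)) :
    Submodule.span R (Set.range φ) = Submodule.span R (Set.range ψ) :=
  le_antisymm
    (span_range_le_of_isGenerator hz φ hFφ hVφ
      (fun _ => mem_span_range_of_commute F hFψ) (fun _ => mem_span_range_of_commute V hVψ) hφz)
    (span_range_le_of_isGenerator hz ψ hFψ hVψ
      (fun _ => mem_span_range_of_commute F hFφ) (fun _ => mem_span_range_of_commute V hVφ) hψz)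

section FV

variable {F : M →ₛₗ[σ] M} {V : M →ₛₗ[τ] M} {p : ℕ}

theorem commute_of_comp_eq (hFV : ∀ x, F (V x) = (p : R) • x) (hVF : ∀ x, V (F x) = (p : R) • x) :
    Function.Commute V F := fun x => (hVF x).trans (hFV x).symm

theorem iterate_apply_iterate (hFV : ∀ x, F (V x) = (p : R) • x) (n : ℕ) (x : M) :
    F^[n] (V^[n] x) = (p : R) ^ n • x := by
  induction n generalizing x with
  | zero => simp
  | succ n ih =>
    rw [Function.iterate_succ_apply' V, Function.iterate_succ_apply F, hFV,
      ((commute_natCast_smul F p).iterate_left n).eq, ih, smul_smul, pow_succ']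

end FV

end Semiring

section Ring

variable {R M : Type*} [Ring R] [AddCommGroup M] [Module R M] {σ τ : R →+* R}

theorem commute_neg_natCast_pow_smul (f : M →ₛₗ[σ] M) (p e : ℕ) :
    Function.Commute f (fun x => -((p : R) ^ e • x)) := fun x => by
  rw [map_neg, commute_natCast_pow_smul f p e x]

variable {F : M →ₛₗ[σ] M} {V : M →ₛₗ[τ] M} {p : ℕ}

theorem iterate_add_apply_eq_neg_smul_of_add_eq_zero (hFV : ∀ x, F (V x) = (p : R) • x)
    {c d : ℕ} {z : M} (hrel : F^[c] z + V^[d] z = 0) : F^[c + d] z = -((p : R) ^ d • z) := by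
  rw [add_comm, Function.iterate_add_apply, eq_neg_of_add_eq_zero_left hrel, iterate_map_neg,
    iterate_apply_iterate hFV]

end Ring

end DieudonneStmt

noncomputable section

namespace DieudonneStmt

variable (p : ℕ) [Fact p.Prime] (k : Type*) [Field k] [IsAlgClosed k] [CharP k p]
variable (M : Type*) [AddCommGroup M] [Module (WittVector p k) M]

theorem F_pow_h_eq_p_pow_d
    -- `F` is `σ`-semilinear, `V` is `σ⁻¹`-semilinear, and `F ∘ V = V ∘ F = p·id`
    (F V : M → M)
    (hFadd : ∀ x y, F (x + y) = F x + F y)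
    (hVadd : ∀ x y, V (x + y) = V x + V y)
    (hFsmul : ∀ (a : WittVector p k) (x : M), F (a • x) = WittVector.frobeniusEquiv p k a • F x)
    (hVsmul : ∀ (a : WittVector p k) (x : M),
      V (a • x) = (WittVector.frobeniusEquiv p k).symm a • V x)
    (hFV : ∀ x, F (V x) = (p : WittVector p k) • x)
    (hVF : ∀ x, V (F x) = (p : WittVector p k) • x)
    -- `z` generates `M`: the only `W(k)`-submodule containing `z` stable under `F` and `V` is `M`
    (z : M)
    (hz : ∀ P : Submodule (WittVector p k) M,
      z ∈ P → (∀ x ∈ P, F x ∈ P) → (∀ x ∈ P, V x ∈ P) → P = ⊤)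
    (c d : ℕ)
    -- the relation `F^c z + V^d z = 0`
    (hrel : F^[c] z + V^[d] z = 0) :
    Submodule.span (WittVector p k) (Set.range (F^[c + d])) =
      Submodule.span (WittVector p k) (Set.range (fun x : M => ((p : WittVector p k) ^ d) • x)) ∧
    (∀ i : Fin c, F^[c + d] (F^[(i : ℕ) + 1] z) = -(((p : WittVector p k) ^ d) • F^[(i : ℕ) + 1] z)) ∧
    (∀ i : Fin d, F^[c + d] (V^[(i : ℕ)] z) = -(((p : WittVector p k) ^ d) • V^[(i : ℕ)] z)) := by
  let Fₛ : M →ₛₗ[(WittVector.frobeniusEquiv p k : WittVector p k →+* WittVector p k)] M :=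
    ⟨⟨F, hFadd⟩, hFsmul⟩
  let Vₛ : M →ₛₗ[((WittVector.frobeniusEquiv p k).symm : WittVector p k →+* WittVector p k)] M :=
    ⟨⟨V, hVadd⟩, hVsmul⟩
  have hVF_comm : Function.Commute V F := commute_of_comp_eq (F := Fₛ) (V := Vₛ) hFV hVF
  have hT : F^[c + d] z = -((p : WittVector p k) ^ d • z) :=
    iterate_add_apply_eq_neg_smul_of_add_eq_zero (F := Fₛ) (V := Vₛ) hFV hrel
  have hTF : Function.Commute F^[c + d] F := Function.Commute.iterate_self F _
  have hTV : Function.Commute F^[c + d] V := (hVF_comm.iterate_right _).symm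
  refine ⟨?_, fun i => hTF.apply_iterate_eq_of_apply_eq
    (commute_neg_natCast_pow_smul Fₛ p d).symm hT _,
    fun i => hTV.apply_iterate_eq_of_apply_eq (commute_neg_natCast_pow_smul Vₛ p d).symm hT _⟩
  refine span_range_eq_of_isGenerator (F := Fₛ) (V := Vₛ) hz (Fₛ.iterate (c + d))
    (LinearMap.lsmul _ M ((p : WittVector p k) ^ d)) hTF.symm hTV.symm
    (commute_natCast_pow_smul Fₛ p d) (commute_natCast_pow_smul Vₛ p d) ?_ ?_
  · change F^[c + d] z ∈ _
    rw [hT]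
    exact Submodule.neg_mem _ (Submodule.subset_span ⟨z, rfl⟩)
  · change (p : WittVector p k) ^ d • z ∈ _
    rw [← neg_neg ((p : WittVector p k) ^ d • z), ← hT]
    exact Submodule.neg_mem _ (Submodule.subset_span ⟨z, rfl⟩)

end DieudonneStmt
end
end
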